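/- arXiv:2312.12077 — 6 statements merged into one kernel-verified Lean document; each statement's English description precedes it below -/
import Mathlib

section
/- Let k ≥ 1 and let α ∈ 𝒜^k ∩ 𝒵^k. Then in the quantum Volterra algebra A_a one has π_a( Σ_{β ∈ 𝒜^k, β ∼ α} u_β ) = P_α(ω) · π_a(u_α), i.e. the sum of all admissible monomials similar to u_α projects to the explicit product of Gaussian binomials P_α(ω) times the normally ordered monomial u_α. -/
noncomputable section
open scoped BigOperators Classical

abbrev K : Type := RatFunc ℂ

noncomputable def ω : K := RatFunc.X

def nu {k : ℕ} (α : Fin k → ℤ) (i : ℤ) : ℕ :=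
  (Finset.univ.filter (fun j => α j = i)).card

def shift {k : ℕ} (α : Fin k → ℤ) (m : ℤ) : Fin k → ℤ := fun j => α j + m

def Adm (k : ℕ) : Set (Fin k → ℤ) :=
  {α | (∀ j : Fin k, -((j : ℕ) : ℤ) ≤ α j ∧ α j ≤ (k : ℤ) - ((j : ℕ) : ℤ) - 1) ∧
       (∀ i : Fin k, ∀ h : (i : ℕ) + 1 < k, α i ≤ α ⟨(i : ℕ) + 1, h⟩ + 1)}

def Noninc (k : ℕ) : Set (Fin k → ℤ) :=
  {α | ∀ i : Fin k, ∀ h : (i : ℕ) + 1 < k,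
      α ⟨(i : ℕ) + 1, h⟩ ≤ α i ∧ α i ≤ α ⟨(i : ℕ) + 1, h⟩ + 1}

def NSet (k : ℕ) : Set (Fin (k+1) → ℤ) :=
  {α | α ∈ Adm (k+1) ∧ α ∈ Noninc (k+1) ∧ α (Fin.last k) = 0}

noncomputable def gbinom (m r : ℕ) : K :=
  ∏ s ∈ Finset.range r, (1 - ω ^ (m - s)) / (1 - ω ^ (s + 1))

noncomputable def P {k : ℕ} (α : Fin (k+1) → ℤ) : K :=
  if α ∈ Adm (k+1) ∩ Noninc (k+1) then
    (∏ i ∈ Finset.Icc (1 : ℤ) (α 0),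
        gbinom (nu α i + nu α (i-1) - 1) (nu α i)) *
    (∏ i ∈ Finset.Icc (α (Fin.last k) + 1) (0 : ℤ),
        gbinom (nu α i + nu α (i-1) - 1) (nu α (i-1)))
  else 0

abbrev F : Type := FreeAlgebra K ℤ

noncomputable def u (n : ℤ) : F := FreeAlgebra.ι K n

inductive RelA : F → F → Prop
  | comm1 (n : ℤ) : RelA (u n * u (n+1)) (ω • (u (n+1) * u n))
  | comm2 (n m : ℤ) : 2 ≤ |n - m| → RelA (u n * u m) (u m * u n)

abbrev Aa : Type := RingQuot RelA

noncomputable def πa : F →ₐ[K] Aa := RingQuot.mkAlgHom K RelA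

noncomputable def mono {k : ℕ} (α : Fin k → ℤ) : F :=
  (List.ofFn (fun j => u (α j))).prod

noncomputable def X (k : ℕ) : F := ∑ᶠ α ∈ Adm k, mono α

namespace QV

/-! ### Combinatorial definitions on lists -/

def invc : List ℤ → ℕ
  | [] => 0
  | x :: t => t.count (x+1) + invc t

@[simp] lemma invc_nil : invc [] = 0 := rfl
@[simp] lemma invc_cons (x : ℤ) (t : List ℤ) :
    invc (x :: t) = t.count (x+1) + invc t := rfl

def Good : ℤ → List ℤ → Prop
  | q, [] => q ≤ 0
  | q, y :: l => q ≤ y + 1 ∧ Good y l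

@[simp] lemma good_nil (q : ℤ) : Good q [] ↔ q ≤ 0 := Iff.rfl
@[simp] lemma good_cons (q y : ℤ) (l : List ℤ) :
    Good q (y :: l) ↔ q ≤ y + 1 ∧ Good y l := Iff.rfl

noncomputable def Sq : ℕ → ℕ → K
  | t, 0 => if t = 0 then 1 else 0
  | t, m+1 => ∑ d ∈ Finset.range (t+1), ω ^ d * Sq d m

lemma Sq_zero (t : ℕ) : Sq t 0 = if t = 0 then 1 else 0 := rfl
lemma Sq_succ (t m : ℕ) : Sq t (m+1) = ∑ d ∈ Finset.range (t+1), ω ^ d * Sq d m := rfl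

/-! ### q-binomial lemmas -/

lemma omega_pow_ne_one {s : ℕ} (hs : 1 ≤ s) : (ω : K) ^ s ≠ 1 := by
  intro h
  have : (algebraMap (Polynomial ℂ) K) (Polynomial.X ^ s) = (algebraMap (Polynomial ℂ) K) 1 := by
    rw [map_pow, map_one, RatFunc.algebraMap_X]; exact h
  have hX : (Polynomial.X : Polynomial ℂ) ^ s = 1 := RatFunc.algebraMap_injective ℂ this
  have := congrArg Polynomial.natDegree hX
  simp [Polynomial.natDegree_X_pow] at this
  omega

lemma one_sub_omega_pow_ne {s : ℕ} (hs : 1 ≤ s) : (1 : K) - ω ^ s ≠ 0 := by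
  intro h
  exact omega_pow_ne_one hs (sub_eq_zero.mp h).symm

noncomputable def Num (n r : ℕ) : K := ∏ s ∈ Finset.range r, (1 - ω ^ (n - s))
noncomputable def Den (r : ℕ) : K := ∏ s ∈ Finset.range r, (1 - ω ^ (s + 1))

lemma den_ne (r : ℕ) : Den r ≠ 0 := by
  refine Finset.prod_ne_zero_iff.mpr fun s _ => one_sub_omega_pow_ne (by omega)

lemma gbinom_eq (n r : ℕ) : gbinom n r = Num n r / Den r := by
  rw [Num, Den, gbinom, Finset.prod_div_distrib]

lemma den_succ (r : ℕ) : Den (r+1) = Den r * (1 - ω ^ (r+1)) := Finset.prod_range_succ _ _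

lemma num_A (n r : ℕ) : Num n (r+1) = (1 - ω ^ n) * Num (n-1) r := by
  rw [Num, Num, Finset.prod_range_succ', mul_comm, Nat.sub_zero]
  exact congrArg (fun z => (1 - ω ^ n) * z) (Finset.prod_congr rfl fun s _ => by
    have : n - (s + 1) = n - 1 - s := by omega
    rw [this])

lemma num_B (n r : ℕ) : Num n r * (1 - ω ^ (n - r)) = (1 - ω ^ n) * Num (n-1) r := by
  have h1 : Num n (r+1) = Num n r * (1 - ω ^ (n - r)) := Finset.prod_range_succ _ _
  rw [← h1, num_A]

lemma gbinom_zero (n : ℕ) : gbinom n 0 = 1 := by simp [gbinom]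

lemma gbinom_diag_zero {t : ℕ} (ht : 1 ≤ t) : gbinom (t - 1) t = 0 := by
  rw [gbinom_eq]
  have hm : t - 1 ∈ Finset.range t := Finset.mem_range.mpr (by omega)
  have : Num (t-1) t = 0 := by
    apply Finset.prod_eq_zero hm
    simp [Nat.sub_self]
  simp [this]

lemma pascal {n r : ℕ} (hr : 1 ≤ r) (hrn : r ≤ n) :
    gbinom n r = gbinom (n-1) (r-1) + ω ^ r * gbinom (n-1) r := by
  have hn : 1 ≤ n := le_trans hr hrn
  have hNum : Num n r = Num (n-1) (r-1) * (1 - ω ^ r) + ω ^ r * Num (n-1) r := by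
    have hcancel : (1 - ω ^ n) ≠ 0 := one_sub_omega_pow_ne hn
    apply mul_left_cancel₀ hcancel
    have hA : Num n r = (1 - ω ^ n) * Num (n-1) (r-1) := by
      have := num_A n (r-1); rwa [Nat.sub_add_cancel hr] at this
    have hB : Num n r * (1 - ω ^ (n - r)) = (1 - ω ^ n) * Num (n-1) r := num_B n r
    have hpow : ω ^ r * ω ^ (n - r) = ω ^ n := by
      rw [← pow_add]; congr 1; omega
    linear_combination (1 - ω ^ r) * hA + ω ^ r * hB + Num n r * hpow
  have hDen : Den r = Den (r-1) * (1 - ω ^ r) := by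
    have := den_succ (r-1); rwa [Nat.sub_add_cancel hr] at this
  rw [gbinom_eq, gbinom_eq, gbinom_eq, hNum, hDen]
  have h1 : (1 - ω ^ r) ≠ 0 := one_sub_omega_pow_ne hr
  have h2 := den_ne (r-1)
  field_simp

lemma Sq_eq : ∀ m t, Sq t m = gbinom (t + m - 1) t := by
  intro m
  induction m with
  | zero =>
    intro t
    rcases Nat.eq_zero_or_pos t with rfl | ht
    · simp [Sq_zero, gbinom_zero]
    · rw [Sq_zero, if_neg (by omega)]
      exact (gbinom_diag_zero ht).symm
  | succ m ih =>
    intro t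
    induction t with
    | zero => simp [Sq_succ, Finset.sum_range_one, ih 0, gbinom_zero]
    | succ t iht =>
      have e3 : t + (m + 1) - 1 = t + m := by omega
      have e4 : t + 1 + (m + 1) - 1 = t + 1 + m := by omega
      have e5 : t + 1 + m - 1 = t + m := by omega
      rw [Sq_succ, Finset.sum_range_succ, ← Sq_succ, iht, ih (t+1), e3, e4, e5]
      have hp := pascal (n := t + 1 + m) (r := t + 1) (by omega) (by omega)
      rw [e5, show t + 1 - 1 = t from rfl] at hp
      exact hp.symm

/-! ### counting and invc lemmas -/

lemma count_filter_ne {a x : ℤ} (l : List ℤ) (hx : x ≠ a) :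
    (l.filter (· ≠ a)).count x = l.count x :=
  List.count_filter (by simpa using hx)

lemma count_filter_self (a : ℤ) (l : List ℤ) : (l.filter (· ≠ a)).count a = 0 := by
  rw [List.count_eq_zero]
  intro h
  have := List.of_mem_filter h
  simp at this

lemma invc_append_replicate (c : ℕ) (a : ℤ) (r : List ℤ) :
    invc (List.replicate c a ++ r) = c * r.count (a+1) + invc r := by
  induction c with
  | zero => simp
  | succ c ih =>
    rw [List.replicate_succ, List.cons_append, invc_cons, ih, List.count_append,
      List.count_replicate]
    have : (a == a + 1) = false := beq_eq_false_iff_ne.mpr (by omega)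
    rw [this]
    simp
    ring

lemma invc_concat (l : List ℤ) (x : ℤ) :
    invc (l ++ [x]) = l.count (x-1) + invc l := by
  induction l with
  | nil => simp
  | cons y t ih =>
    rw [List.cons_append, invc_cons, ih, List.count_append, invc_cons, List.count_cons,
      List.count_cons]
    simp only [List.count_nil, List.count_singleton, beq_iff_eq]
    by_cases h : x = y + 1
    · have h2 : y = x - 1 := by omega
      rw [if_pos h, if_pos h2]
      ring
    · have h2 : ¬ y = x - 1 := by omega
      rw [if_neg h, if_neg h2]
      ring

/-! ### Good lemmas -/

lemma good_mono : ∀ (l : List ℤ) {q q' : ℤ}, q' ≤ q → Good q l → Good q' l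
  | [], q, q', h, hg => by simp at hg ⊢; omega
  | y :: l, q, q', h, hg => ⟨le_trans h hg.1, hg.2⟩

lemma not_good_replicate {a : ℤ} (ha : 1 ≤ a) :
    ∀ (c : ℕ) (q : ℤ), c ≠ 0 → ¬ Good q (List.replicate c a) := by
  intro c
  induction c with
  | zero => intro q h; exact absurd rfl h
  | succ c ih =>
    intro q _ hg
    rw [List.replicate_succ] at hg
    rcases Nat.eq_zero_or_pos c with rfl | hc
    · simp at hg; omega
    · exact ih a (by omega) hg.2

lemma good_filter {a : ℤ} : ∀ (l : List ℤ) (q : ℤ), q ≤ a → (∀ z ∈ l, z ≤ a) →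
    Good q l → Good q (l.filter (· ≠ a)) := by
  intro l
  induction l with
  | nil => intro q _ _ hg; simpa using hg
  | cons z l ih =>
    intro q hq hle hg
    by_cases hz : z = a
    · rw [List.filter_cons_of_neg (by simp [hz])]
      exact good_mono _ hq (ih a le_rfl (fun x hx => hle x (List.mem_cons_of_mem _ hx))
        (hz ▸ hg.2))
    · rw [List.filter_cons_of_pos (by simpa using hz)]
      exact ⟨hg.1, ih z (hle z (List.mem_cons_self))
        (fun x hx => hle x (List.mem_cons_of_mem _ hx)) hg.2⟩

lemma good_ivt : ∀ (l : List ℤ) {q v : ℤ}, Good q l → 0 ≤ v → v + 1 ≤ q → v ∈ l := by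
  intro l
  induction l with
  | nil => intro q v hg h0 h1; simp at hg; omega
  | cons y l ih =>
    intro q v hg h0 h1
    by_cases hv : v = y
    · simp [hv]
    · have : v + 1 ≤ y := by have := hg.1; omega
      exact List.mem_cons_of_mem _ (ih hg.2 h0 this)

lemma good_getLast : ∀ (l : List ℤ) {q : ℤ} (h : l ≠ []), Good q l → l.getLast h ≤ 0
  | [], q, h, _ => absurd rfl h
  | [y], q, h, hg => by simpa using hg.2
  | y :: z :: l, q, h, hg => by
    rw [List.getLast_cons (by simp)]
    exact good_getLast (z :: l) (by simp) hg.2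

/-! ### block decomposition -/

lemma decomp {a : ℤ} : ∀ (l : List ℤ) {y : ℤ} {w : List ℤ}, l.filter (· ≠ a) = y :: w →
    ∃ c l₂, l = List.replicate c a ++ y :: l₂ ∧ l₂.filter (· ≠ a) = w := by
  intro l
  induction l with
  | nil => intro y w h; simp at h
  | cons z l ih =>
    intro y w h
    by_cases hz : z = a
    · subst hz
      rw [List.filter_cons_of_neg (by simp)] at h
      obtain ⟨c, l₂, rfl, h₂⟩ := ih h
      exact ⟨c + 1, l₂, by rw [List.replicate_succ, List.cons_append], h₂⟩
    · rw [List.filter_cons_of_pos (by simpa using hz)] at h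
      injection h with h1 h2
      subst h1
      exact ⟨0, l, by simp, h2⟩

lemma good_block_fwd {a : ℤ} : ∀ (c : ℕ) {q y : ℤ} {l₂ : List ℤ},
    Good q (List.replicate c a ++ y :: l₂) →
    Good y l₂ ∧ (c = 0 → q ≤ y + 1) ∧ (c ≠ 0 → a ≤ y + 1) := by
  intro c
  induction c with
  | zero =>
    intro q y l₂ hg
    exact ⟨hg.2, fun _ => hg.1, fun h => absurd rfl h⟩
  | succ c ih =>
    intro q y l₂ hg
    rw [List.replicate_succ, List.cons_append] at hg
    obtain ⟨h1, h2, h3⟩ := ih hg.2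
    refine ⟨h1, fun h => by omega, fun _ => ?_⟩
    rcases Nat.eq_zero_or_pos c with rfl | hc
    · exact h2 rfl
    · exact h3 (by omega)

lemma good_block_bwd {a : ℤ} : ∀ (c : ℕ) {q y : ℤ} {l₂ : List ℤ},
    Good y l₂ → (c = 0 → q ≤ y + 1) → (c ≠ 0 → q ≤ a + 1 ∧ a ≤ y + 1) →
    Good q (List.replicate c a ++ y :: l₂) := by
  intro c
  induction c with
  | zero =>
    intro q y l₂ hg h0 _
    exact ⟨h0 rfl, hg⟩
  | succ c ih =>
    intro q y l₂ hg _ h1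
    rw [List.replicate_succ, List.cons_append]
    refine ⟨(h1 (by omega)).1, ih hg (fun _ => ?_) (fun _ => ⟨by omega, (h1 (by omega)).2⟩)⟩
    exact (h1 (by omega)).2

lemma block_inj {a y : ℤ} (hy : y ≠ a) : ∀ (c c' : ℕ) (l₂ l₂' : List ℤ),
    List.replicate c a ++ y :: l₂ = List.replicate c' a ++ y :: l₂' → c = c' ∧ l₂ = l₂' := by
  intro c
  induction c with
  | zero =>
    intro c' l₂ l₂' h
    cases c' with
    | zero => simpa using h
    | succ c' =>
      rw [List.replicate_succ] at h
      simp at h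
      exact absurd h.1 hy
  | succ c ih =>
    intro c' l₂ l₂' h
    cases c' with
    | zero =>
      rw [List.replicate_succ] at h
      simp at h
      exact absurd h.1.symm hy
    | succ c' =>
      rw [List.replicate_succ, List.replicate_succ] at h
      simp only [List.cons_append, List.cons.injEq, true_and] at h
      obtain ⟨h1, h2⟩ := ih c' l₂ l₂' h
      exact ⟨by omega, h2⟩
/-! ### count helper lemmas -/

lemma count_replicate_append (c : ℕ) (a x : ℤ) (r : List ℤ) :
    (List.replicate c a ++ r).count x = (if a = x then c else 0) + r.count x := by
  rw [List.count_append, List.count_replicate]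
  simp only [beq_iff_eq]

lemma count_cons' (y x : ℤ) (l : List ℤ) :
    (y :: l).count x = (if y = x then 1 else 0) + l.count x := by
  rw [List.count_cons]
  simp only [beq_iff_eq]
  omega

/-! ### the fiber Finset -/

noncomputable def Fib (a q : ℤ) (w : List ℤ) (t : ℕ) : Finset (List ℤ) :=
  (List.replicate t a ++ w).permutations.toFinset.filter
    (fun l => l.filter (· ≠ a) = w ∧ Good q l)

lemma mem_Fib {a q : ℤ} {w l : List ℤ} {t : ℕ} :
    l ∈ Fib a q w t ↔ l.Perm (List.replicate t a ++ w) ∧ l.filter (· ≠ a) = w ∧ Good q l := by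
  simp only [Fib, Finset.mem_filter, List.mem_toFinset, List.mem_permutations]

/-! ### the key fiber-sum lemma -/

lemma main_fiber {a : ℤ} (ha : 1 ≤ a) :
    ∀ (w : List ℤ) (q : ℤ) (t : ℕ), q ≤ a + 1 → (∀ x ∈ w, x ≤ a - 1) → Good q w →
    ∑ l ∈ Fib a q w t, (ω : K) ^ invc l = Sq t (w.count (a-1)) * ω ^ invc w := by
  intro w
  induction w with
  | nil =>
    intro q t _ _ hgood
    have hgq : q ≤ 0 := hgood
    rcases Nat.eq_zero_or_pos t with rfl | ht
    · have hFib : Fib a q [] 0 = {[]} := by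
        ext l
        simp only [mem_Fib, List.replicate_zero, List.nil_append, List.perm_nil,
          Finset.mem_singleton, List.filter_nil]
        constructor
        · rintro ⟨rfl, -, -⟩; rfl
        · rintro rfl; exact ⟨rfl, rfl, hgq⟩
      rw [hFib]
      simp [Sq_zero]
    · have hFib : Fib a q [] t = ∅ := by
        ext l
        simp only [mem_Fib, List.append_nil, Finset.notMem_empty, iff_false]
        rintro ⟨hperm, -, hg⟩
        rw [List.perm_replicate] at hperm
        subst hperm
        exact not_good_replicate ha t q (by omega) hg
      rw [hFib]
      rw [List.count_nil, Sq_zero, if_neg (by omega)]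
      simp
  | cons y w' ih =>
    intro q t hq hle hgood
    obtain ⟨hqy, hgw'⟩ := hgood
    have hy : y ≤ a - 1 := hle y (List.mem_cons_self)
    have hw'le : ∀ x ∈ w', x ≤ a - 1 := fun x hx => hle x (List.mem_cons_of_mem _ hx)
    have hca : w'.count a = 0 := List.count_eq_zero.mpr fun hmem => by
      have := hw'le a hmem; omega
    have hca1 : w'.count (a+1) = 0 := List.count_eq_zero.mpr fun hmem => by
      have := hw'le (a+1) hmem; omega
    by_cases hya : y = a - 1
    · -- y = a - 1 : blocks of a's may be inserted before y
      have hset : Fib a q (y :: w') t =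
          (Finset.range (t+1)).biUnion (fun c =>
            (Fib a y w' (t - c)).image (fun l₂ => List.replicate c a ++ y :: l₂)) := by
        ext l
        simp only [Finset.mem_biUnion, Finset.mem_range, Finset.mem_image, mem_Fib]
        constructor
        · rintro ⟨hperm, hfil, hgoodl⟩
          obtain ⟨c, l₂, rfl, hfil₂⟩ := decomp _ hfil
          obtain ⟨hgl₂, -, -⟩ := good_block_fwd c hgoodl
          have hct : c + l₂.count a = t := by
            have hcnta := hperm.count_eq a
            simp only [count_replicate_append, count_cons', hca] at hcnta
            split_ifs at hcnta <;> omega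
          refine ⟨c, by omega, l₂, ⟨List.perm_iff_count.mpr fun x => ?_, hfil₂, hgl₂⟩, rfl⟩
          have hcx := hperm.count_eq x
          by_cases hxa : x = a
          · subst hxa
            simp only [count_replicate_append, count_cons', hca] at hcx ⊢
            split_ifs at hcx ⊢ <;> omega
          · simp only [count_replicate_append, count_cons',
              if_neg (fun h => hxa h.symm : ¬ a = x)] at hcx ⊢
            split_ifs at hcx ⊢ <;> omega
        · rintro ⟨c, hc, l₂, hl₂, rfl⟩
          obtain ⟨hperm₂, hfil₂, hgood₂⟩ := hl₂
          refine ⟨List.perm_iff_count.mpr fun x => ?_, ?_, ?_⟩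
          · have hcx := hperm₂.count_eq x
            by_cases hxa : x = a
            · subst hxa
              simp only [count_replicate_append, count_cons', hca] at hcx ⊢
              split_ifs at hcx ⊢ <;> omega
            · simp only [count_replicate_append, count_cons',
                if_neg (fun h => hxa h.symm : ¬ a = x)] at hcx ⊢
              split_ifs at hcx ⊢ <;> omega
          · rw [List.filter_append, List.filter_replicate, if_neg (by simp),
              List.filter_cons_of_pos (by simp; omega), hfil₂, List.nil_append]
          · exact good_block_bwd c hgood₂ (fun _ => hqy) (fun _ => ⟨hq, by omega⟩)
      rw [hset]
      have hdisj : (↑(Finset.range (t+1)) : Set ℕ).PairwiseDisjoint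
          (fun c => (Fib a y w' (t - c)).image
            (fun l₂ => List.replicate c a ++ y :: l₂)) := by
        intro c1 _ c2 _ hne
        apply Finset.disjoint_left.mpr
        rintro l hl1 hl2
        simp only [Finset.mem_image] at hl1 hl2
        obtain ⟨l₂, -, h1⟩ := hl1
        obtain ⟨l₂', -, h2⟩ := hl2
        exact hne (block_inj (show y ≠ a by omega) c1 c2 l₂ l₂' (h1.trans h2.symm)).1
      rw [Finset.sum_biUnion hdisj]
      have hinner : ∀ c ∈ Finset.range (t+1),
          (∑ l ∈ (Fib a y w' (t - c)).image (fun l₂ => List.replicate c a ++ y :: l₂),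
            (ω:K) ^ invc l)
          = ω ^ (t - c) * (Sq (t-c) (w'.count (a-1)) * ω ^ invc w') := by
        intro c _
        rw [Finset.sum_image (fun x _ x' _ h =>
          (block_inj (show y ≠ a by omega) _ _ _ _ h).2)]
        have hterm : ∀ l₂ ∈ Fib a y w' (t-c),
            (ω:K) ^ invc (List.replicate c a ++ y :: l₂) = ω ^ (t - c) * ω ^ invc l₂ := by
          intro l₂ hl₂
          rw [mem_Fib] at hl₂
          have hc1 : l₂.count (a+1) = 0 := by
            rw [hl₂.1.count_eq, count_replicate_append, if_neg (by omega), hca1]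
          have hc2 : l₂.count a = t - c := by
            rw [hl₂.1.count_eq, count_replicate_append, if_pos rfl, hca]
            omega
          rw [invc_append_replicate, invc_cons, count_cons', hc1,
            if_neg (by omega : ¬ y = a + 1)]
          have hy1 : y + 1 = a := by omega
          rw [hy1, hc2, ← pow_add]
          congr 1
          omega
        rw [Finset.sum_congr rfl hterm, ← Finset.mul_sum,
          ih y (t-c) (by omega) hw'le hgw']
      rw [Finset.sum_congr rfl hinner]
      have hre : ∑ c ∈ Finset.range (t+1),
            (ω:K)^(t-c) * (Sq (t-c) (w'.count (a-1)) * ω ^ invc w')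
          = ∑ d ∈ Finset.range (t+1), (ω:K)^d * (Sq d (w'.count (a-1)) * ω ^ invc w') := by
        have := Finset.sum_range_reflect
          (fun d => (ω:K)^d * (Sq d (w'.count (a-1)) * ω ^ invc w')) (t+1)
        simpa using this
      rw [hre]
      have e1 : (y :: w').count (a-1) = w'.count (a-1) + 1 := by
        rw [count_cons', if_pos hya]; omega
      have e2 : invc (y :: w') = invc w' := by
        rw [invc_cons]
        have hy1 : y + 1 = a := by omega
        rw [hy1, hca]
        omega
      rw [e1, e2, Sq_succ, Finset.sum_mul]
      exact Finset.sum_congr rfl fun d _ => by ring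
    · -- y ≤ a - 2 : no a-block can sit in front
      have hset : Fib a q (y :: w') t = (Fib a y w' t).image (fun l₂ => y :: l₂) := by
        ext l
        simp only [Finset.mem_image, mem_Fib]
        constructor
        · rintro ⟨hperm, hfil, hgoodl⟩
          obtain ⟨c, l₂, rfl, hfil₂⟩ := decomp _ hfil
          obtain ⟨hgl₂, h0, hcne⟩ := good_block_fwd c hgoodl
          have hc0 : c = 0 := by
            by_contra hcc
            have := hcne hcc
            omega
          subst hc0
          simp only [List.replicate_zero, List.nil_append] at hperm ⊢
          refine ⟨l₂, ⟨List.perm_iff_count.mpr fun x => ?_, hfil₂, hgl₂⟩, rfl⟩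
          have hcx := hperm.count_eq x
          by_cases hxa : x = a
          · subst hxa
            simp only [count_replicate_append, count_cons', hca] at hcx ⊢
            split_ifs at hcx ⊢ <;> omega
          · simp only [count_replicate_append, count_cons',
              if_neg (fun h => hxa h.symm : ¬ a = x)] at hcx ⊢
            split_ifs at hcx ⊢ <;> omega
        · rintro ⟨l₂, hl₂, rfl⟩
          obtain ⟨hperm₂, hfil₂, hgood₂⟩ := hl₂
          refine ⟨List.perm_iff_count.mpr fun x => ?_, ?_, ⟨hqy, hgood₂⟩⟩
          · have hcx := hperm₂.count_eq x
            by_cases hxa : x = a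
            · subst hxa
              simp only [count_replicate_append, count_cons', hca] at hcx ⊢
              split_ifs at hcx ⊢ <;> omega
            · simp only [count_replicate_append, count_cons',
                if_neg (fun h => hxa h.symm : ¬ a = x)] at hcx ⊢
              split_ifs at hcx ⊢ <;> omega
          · rw [List.filter_cons_of_pos (by simp; omega), hfil₂]
      rw [hset, Finset.sum_image (fun x _ x' _ h => by injection h)]
      have hterm : ∀ l₂ ∈ Fib a y w' t,
          (ω:K) ^ invc (y :: l₂) = ω ^ (w'.count (y+1)) * ω ^ invc l₂ := by
        intro l₂ hl₂
        rw [mem_Fib] at hl₂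
        have hcy : l₂.count (y+1) = w'.count (y+1) := by
          rw [hl₂.1.count_eq, count_replicate_append, if_neg (by omega)]
          omega
        rw [invc_cons, hcy, pow_add]
      rw [Finset.sum_congr rfl hterm, ← Finset.mul_sum,
        ih y t (by omega) hw'le hgw']
      have e1 : (y :: w').count (a-1) = w'.count (a-1) := by
        rw [count_cons', if_neg hya]
        omega
      have e2 : invc (y :: w') = w'.count (y+1) + invc w' := invc_cons _ _
      rw [e1, e2, pow_add]
      ring
/-! ### more helper lemmas -/

lemma invc_replicate (n : ℕ) (z : ℤ) : invc (List.replicate n z) = 0 := by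
  induction n with
  | zero => rfl
  | succ n ih =>
    rw [List.replicate_succ, invc_cons, ih, List.count_replicate,
      if_neg (by simp)]

lemma sorted_le_head : ∀ (l : List ℤ) (h : l ≠ []), l.Pairwise (· ≥ ·) →
    ∀ z ∈ l, z ≤ l.head h := by
  rintro ⟨⟩ h hs z hz
  · exact absurd rfl h
  · rcases List.mem_cons.mp hz with rfl | hz'
    · simp
    · simpa using List.rel_of_pairwise_cons hs hz'

lemma sorted_getLast_le : ∀ (l : List ℤ) (h : l ≠ []), l.Pairwise (· ≥ ·) →
    ∀ z ∈ l, l.getLast h ≤ z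
  | [], h, _, _, _ => absurd rfl h
  | [y], _, _, z, hz => by simp at hz; simp [hz]
  | y :: x :: l, _, hs, z, hz => by
    rw [List.getLast_cons (by simp : (x :: l) ≠ [])]
    rcases List.mem_cons.mp hz with rfl | hz'
    · exact List.rel_of_pairwise_cons hs (List.getLast_mem _)
    · exact sorted_getLast_le (x :: l) (by simp) hs.of_cons z hz'

lemma getLast?_filter (p : ℤ → Bool) : ∀ (l : List ℤ) (z : ℤ), l.getLast? = some z →
    p z = true → (l.filter p).getLast? = some z := by
  intro l
  induction l with
  | nil => intro z h; simp at h
  | cons y l ih =>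
    intro z h hp
    rcases eq_or_ne l [] with rfl | hl
    · simp only [List.getLast?_singleton, Option.some.injEq] at h
      subst h
      simp [List.filter_cons, hp]
    · obtain ⟨w, l', rfl⟩ := List.exists_cons_of_ne_nil hl
      rw [List.getLast?_cons_cons] at h
      have hrec := ih z h hp
      have hne : ((w :: l').filter p) ≠ [] := by
        intro hemp; rw [hemp] at hrec; simp at hrec
      rw [List.filter_cons]
      by_cases hpy : p y
      · rw [if_pos hpy]
        obtain ⟨u, m, hm⟩ := List.exists_cons_of_ne_nil hne
        rw [hm] at hrec ⊢
        rw [List.getLast?_cons_cons]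
        exact hrec
      · rw [if_neg (by simpa using hpy)]
        exact hrec

/-! ### good_iff and the reversal symmetry -/

lemma good_iff : ∀ (l : List ℤ) (h : l ≠ []) (q : ℤ),
    Good q l ↔ q ≤ l.head h + 1 ∧ List.IsChain (fun p z => p ≤ z + 1) l ∧ l.getLast h ≤ 0
  | [], h, _ => absurd rfl h
  | [y], _, q => by
    simp only [good_cons, good_nil, List.head_cons, List.getLast_singleton,
      List.isChain_singleton, true_and]
  | y :: z :: l, _, q => by
    rw [good_cons, good_iff (z :: l) (by simp) y, List.isChain_cons_cons, List.head_cons,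
      List.getLast_cons (by simp : (z :: l) ≠ []), List.head_cons]
    tauto

def nrev (l : List ℤ) : List ℤ := (l.map (fun z => -z)).reverse

lemma nrev_ne_nil {l : List ℤ} (h : l ≠ []) : nrev l ≠ [] := by
  simp [nrev, h]

lemma nrev_nrev (l : List ℤ) : nrev (nrev l) = l := by
  simp [nrev, List.map_reverse, List.map_map, Function.comp]

lemma nrev_perm {l l' : List ℤ} (h : l.Perm l') : (nrev l).Perm (nrev l') :=
  (List.reverse_perm _).trans ((h.map _).trans (List.reverse_perm _).symm)

lemma count_nrev (l : List ℤ) (z : ℤ) : (nrev l).count z = l.count (-z) := by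
  rw [nrev, List.count_reverse]
  have := List.count_map_of_injective l (fun w : ℤ => -w) neg_injective (-z)
  simpa using this

lemma nrev_cons (y : ℤ) (l : List ℤ) : nrev (y :: l) = nrev l ++ [-y] := by
  simp [nrev]

lemma invc_nrev (l : List ℤ) : invc (nrev l) = invc l := by
  induction l with
  | nil => rfl
  | cons y l ih =>
    rw [nrev_cons, invc_concat, ih, invc_cons, count_nrev]
    have : -(-y - 1) = y + 1 := by ring
    rw [this]

lemma head_nrev (l : List ℤ) (hl : l ≠ []) (hn : nrev l ≠ []) :
    (nrev l).head hn = - l.getLast hl := by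
  have h1 : (nrev l).head? = some (- l.getLast hl) := by
    rw [nrev, List.head?_reverse, List.getLast?_map, List.getLast?_eq_getLast hl]
    rfl
  have h2 := List.head?_eq_head hn
  rw [h1] at h2
  injection h2 with h3
  exact h3.symm

lemma getLast_nrev (l : List ℤ) (hl : l ≠ []) (hn : nrev l ≠ []) :
    (nrev l).getLast hn = - l.head hl := by
  have h1 : (nrev l).getLast? = some (- l.head hl) := by
    rw [nrev, List.getLast?_reverse, List.head?_map, List.head?_eq_head hl]
    rfl
  have h2 := List.getLast?_eq_getLast hn
  rw [h1] at h2
  injection h2 with h3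
  exact h3.symm

lemma chain'_nrev (l : List ℤ) :
    List.IsChain (fun p z => p ≤ z + 1) (nrev l) ↔ List.IsChain (fun p z => p ≤ z + 1) l := by
  rw [nrev, List.isChain_reverse, List.isChain_map]
  constructor
  · exact fun hc => hc.imp fun a b hab => by omega
  · exact fun hc => hc.imp fun a b hab => by omega

lemma good_nrev (l : List ℤ) (hl : l ≠ []) : Good 1 (nrev l) ↔ Good 1 l := by
  have hn : nrev l ≠ [] := nrev_ne_nil hl
  rw [good_iff l hl 1, good_iff (nrev l) hn 1, head_nrev l hl hn, getLast_nrev l hl hn,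
    chain'_nrev]
  constructor <;> rintro ⟨h1, h2, h3⟩ <;> exact ⟨by omega, h2, by omega⟩

lemma sorted_nrev (l : List ℤ) (hs : l.Pairwise (· ≥ ·)) : (nrev l).Pairwise (· ≥ ·) := by
  rw [nrev, List.pairwise_reverse, List.pairwise_map]
  exact hs.imp fun hab => by omega

lemma Icc_int_succ_top {a b : ℤ} (hab : a ≤ b + 1) :
    Finset.Icc a (b+1) = insert (b+1) (Finset.Icc a b) := by
  ext z
  simp only [Finset.mem_Icc, Finset.mem_insert]
  omega

noncomputable def BigSet (L : List ℤ) : Finset (List ℤ) :=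
  L.permutations.toFinset.filter (fun l => Good 1 l)

lemma mem_BigSet {L l : List ℤ} : l ∈ BigSet L ↔ l.Perm L ∧ Good 1 l := by
  simp only [BigSet, Finset.mem_filter, List.mem_toFinset, List.mem_permutations]
/-! ### the main combinatorial theorem: sum over admissible rearrangements -/

lemma peel : ∀ (N : ℕ) (L : List ℤ) (x b : ℤ) (hL : L ≠ []),
    2 * L.length + (if 1 ≤ x then 0 else 1) ≤ N →
    L.head hL = x → L.getLast hL = b →
    L.Pairwise (· ≥ ·) → Good 1 L →
    ∑ l ∈ BigSet L, (ω:K) ^ invc l =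
      (∏ i ∈ Finset.Icc (1:ℤ) x, Sq (L.count i) (L.count (i-1))) *
      (∏ i ∈ Finset.Icc (b + 1) 0, Sq (L.count (i-1)) (L.count i)) := by
  intro N
  induction N with
  | zero =>
    intro L x b hL hmeas _ _ _ _
    have := List.length_pos_iff.mpr hL
    omega
  | succ N ih =>
    intro L x b hL hmeas hhead hlast hsort hgood
    obtain ⟨x', M, rfl⟩ := List.exists_cons_of_ne_nil hL
    rw [List.head_cons] at hhead
    subst hhead
    have hx0 : 0 ≤ x' := by
      have := hgood.1; omega
    have hble : ∀ z ∈ x' :: M, z ≤ x' := by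
      intro z hz
      simpa using sorted_le_head (x'::M) (by simp) hsort z hz
    have hble0 : b ≤ 0 := by
      have h := good_getLast (x'::M) (by simp) hgood
      rw [hlast] at h; exact h
    by_cases hx1 : 1 ≤ x'
    · -- peel the top level x'
      set t := (x' :: M).count x' with ht
      set L' := (x' :: M).filter (· ≠ x') with hL'
      have ht1 : 1 ≤ t := by
        rw [ht]
        have : 0 < (x'::M).count x' := List.count_pos_iff.mpr (List.mem_cons_self)
        omega
      have hxm : x' - 1 ∈ M := good_ivt M hgood.2 (by omega) (by omega)
      have hmem' : x' - 1 ∈ L' := by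
        rw [hL']
        exact List.mem_filter.mpr ⟨List.mem_cons_of_mem _ hxm, by simp⟩
      have hL'ne : L' ≠ [] := List.ne_nil_of_mem hmem'
      have hsort' : L'.Pairwise (· ≥ ·) := List.Pairwise.filter _ hsort
      have hle' : ∀ z ∈ L', z ≤ x' - 1 := by
        intro z hz
        have h1 := hble z (List.mem_of_mem_filter hz)
        have h2 := List.of_mem_filter hz
        simp at h2
        omega
      have hhead' : L'.head hL'ne = x' - 1 := by
        have h1 : L'.head hL'ne ≤ x' - 1 := hle' _ (List.head_mem hL'ne)
        have h2 : x' - 1 ≤ L'.head hL'ne := sorted_le_head L' hL'ne hsort' _ hmem'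
        omega
      have hlast' : L'.getLast hL'ne = b := by
        have h0 : (x'::M).getLast? = some b := by
          rw [List.getLast?_eq_getLast (by simp), hlast]
        have h1 := getLast?_filter (fun z => decide (z ≠ x')) (x'::M) b h0 (by simp; omega)
        rw [← hL', List.getLast?_eq_getLast hL'ne, Option.some.injEq] at h1
        exact h1
      have hgood' : Good 1 L' := good_filter _ 1 hx1 hble hgood
      have hperm' : (x' :: M).Perm (List.replicate t x' ++ L') := by
        refine List.perm_iff_count.mpr fun z => ?_
        rw [count_replicate_append]
        by_cases hz : z = x'
        · subst hz
          rw [if_pos rfl, hL', count_filter_self, ← ht]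
          omega
        · rw [if_neg (fun h => hz h.symm), hL', count_filter_ne _ hz]
          omega
      have hlen' : L'.length + t = M.length + 1 := by
        have h1 := hperm'.length_eq
        simp only [List.length_append, List.length_replicate, List.length_cons] at h1
        omega
      have hmaps : ∀ l ∈ BigSet (x' :: M), l.filter (· ≠ x') ∈ BigSet L' := by
        intro l hl
        rw [mem_BigSet] at hl ⊢
        exact ⟨hL' ▸ hl.1.filter _,
          good_filter l 1 hx1 (fun z hz => hble z (hl.1.mem_iff.mp hz)) hl.2⟩
      rw [← Finset.sum_fiberwise_of_maps_to hmaps fun l => (ω:K) ^ invc l]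
      have hfib : ∀ w ∈ BigSet L',
          (BigSet (x'::M)).filter (fun l => l.filter (· ≠ x') = w) = Fib x' 1 w t := by
        intro w hw
        rw [mem_BigSet] at hw
        ext l
        simp only [Finset.mem_filter, mem_BigSet, mem_Fib]
        constructor
        · rintro ⟨⟨hp, hg⟩, hf⟩
          exact ⟨hp.trans (hperm'.trans (List.Perm.append_left _ hw.1.symm)), hf, hg⟩
        · rintro ⟨hp, hf, hg⟩
          exact ⟨⟨hp.trans ((List.Perm.append_left _ hw.1).trans hperm'.symm), hg⟩, hf⟩
      have hstep : ∑ w ∈ BigSet L',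
            ∑ l ∈ (BigSet (x'::M)).filter (fun l => l.filter (· ≠ x') = w), (ω:K)^invc l
          = Sq t (L'.count (x'-1)) * ∑ w ∈ BigSet L', (ω:K) ^ invc w := by
        rw [Finset.mul_sum]
        refine Finset.sum_congr rfl fun w hw => ?_
        rw [hfib w hw]
        have hw' := mem_BigSet.mp hw
        rw [main_fiber hx1 w 1 t (by omega) (fun z hz => hle' z (hw'.1.subset hz)) hw'.2,
          hw'.1.count_eq]
      rw [hstep]
      rw [ih L' (x'-1) b hL'ne ?_ hhead' hlast' hsort' hgood']
      swap
      · have hfl : (if 1 ≤ x' - 1 then (0:ℕ) else 1) ≤ 1 := by split_ifs <;> omega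
        rw [if_pos hx1] at hmeas
        simp only [List.length_cons] at hmeas
        omega
      -- bookkeeping on the right-hand side
      have hcnt : ∀ i : ℤ, i ≠ x' → L'.count i = (x'::M).count i := by
        intro i hi; rw [hL', count_filter_ne _ hi]
      have hIcc : Finset.Icc (1:ℤ) x' = insert x' (Finset.Icc 1 (x'-1)) := by
        have h := Icc_int_succ_top (a := (1:ℤ)) (b := x'-1) (by omega)
        rw [show x' - 1 + 1 = x' by ring] at h
        exact h
      rw [hIcc, Finset.prod_insert (by simp only [Finset.mem_Icc]; omega)]
      have h1 : ∏ i ∈ Finset.Icc (1:ℤ) (x'-1), Sq ((x'::M).count i) ((x'::M).count (i-1))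
          = ∏ i ∈ Finset.Icc (1:ℤ) (x'-1), Sq (L'.count i) (L'.count (i-1)) := by
        refine Finset.prod_congr rfl fun i hi => ?_
        rw [Finset.mem_Icc] at hi
        rw [hcnt i (by omega), hcnt (i-1) (by omega)]
      have h2 : ∏ i ∈ Finset.Icc (b+1) (0:ℤ), Sq ((x'::M).count (i-1)) ((x'::M).count i)
          = ∏ i ∈ Finset.Icc (b+1) (0:ℤ), Sq (L'.count (i-1)) (L'.count i) := by
        refine Finset.prod_congr rfl fun i hi => ?_
        rw [Finset.mem_Icc] at hi
        rw [hcnt i (by omega), hcnt (i-1) (by omega)]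
      rw [h1, h2, ← ht, hcnt (x'-1) (by omega)]
      ring
    · -- x' = 0
      have hx'0 : x' = 0 := by omega
      subst hx'0
      rcases eq_or_lt_of_le hble0 with hb0 | hbneg
      · -- all entries are 0
        subst hb0
        have hall : ∀ z ∈ (0:ℤ) :: M, z = 0 := by
          intro z hz
          have h1 := hble z hz
          have h2 := sorted_getLast_le _ (by simp) hsort z hz
          rw [hlast] at h2
          omega
        have hrep : (0:ℤ) :: M = List.replicate ((0:ℤ)::M).length 0 :=
          List.eq_replicate_iff.mpr ⟨rfl, hall⟩
        have hBS : BigSet ((0:ℤ)::M) = {(0:ℤ)::M} := by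
          ext l
          rw [mem_BigSet, Finset.mem_singleton]
          constructor
          · rintro ⟨hp, -⟩
            rw [hrep] at hp ⊢
            exact List.perm_replicate.mp hp
          · rintro rfl
            exact ⟨List.Perm.refl _, hgood⟩
        rw [hBS, Finset.sum_singleton]
        have hinv : invc ((0:ℤ)::M) = 0 := by rw [hrep, invc_replicate]
        rw [hinv]
        rw [show Finset.Icc (1:ℤ) 0 = ∅ from Finset.Icc_eq_empty (by omega),
          show Finset.Icc ((0:ℤ)+1) 0 = ∅ from Finset.Icc_eq_empty (by omega)]
        simp
      · -- b < 0 : use the reversal symmetry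
        have hLne : ((0:ℤ)::M) ≠ [] := by simp
        have hnne : nrev ((0:ℤ)::M) ≠ [] := nrev_ne_nil hLne
        have hkey : ∑ l ∈ BigSet ((0:ℤ)::M), (ω:K)^invc l
            = ∑ l ∈ BigSet (nrev ((0:ℤ)::M)), (ω:K)^invc l := by
          refine Finset.sum_nbij' (i := nrev) (j := nrev) ?_ ?_ ?_ ?_ ?_
          · intro l hl
            rw [mem_BigSet] at hl ⊢
            have hlne : l ≠ [] := by
              intro h
              have := hl.1.length_eq
              rw [h] at this
              simp at this
            exact ⟨nrev_perm hl.1, (good_nrev l hlne).mpr hl.2⟩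
          · intro l hl
            rw [mem_BigSet] at hl ⊢
            have hlne : l ≠ [] := by
              intro h
              have := hl.1.length_eq
              rw [h] at this
              simp [nrev] at this
            refine ⟨?_, (good_nrev l hlne).mpr hl.2⟩
            have := nrev_perm hl.1
            rwa [nrev_nrev] at this
          · intro l _; exact nrev_nrev l
          · intro l _; exact nrev_nrev l
          · intro l _; rw [invc_nrev]
        rw [hkey]
        have hhead2 : (nrev ((0:ℤ)::M)).head hnne = -b := by
          rw [head_nrev _ hLne hnne, hlast]
        have hlast2 : (nrev ((0:ℤ)::M)).getLast hnne = 0 := by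
          rw [getLast_nrev _ hLne hnne, List.head_cons, neg_zero]
        have hsort2 := sorted_nrev _ hsort
        have hgood2 := (good_nrev _ hLne).mpr hgood
        have hlen2 : (nrev ((0:ℤ)::M)).length = ((0:ℤ)::M).length := by simp [nrev]
        rw [ih (nrev ((0:ℤ)::M)) (-b) 0 hnne ?_ hhead2 hlast2 hsort2 hgood2]
        swap
        · rw [if_neg (by omega)] at hmeas
          rw [if_pos (by omega), hlen2]
          omega
        rw [show Finset.Icc ((0:ℤ)+1) 0 = ∅ from Finset.Icc_eq_empty (by omega),
          Finset.prod_empty, mul_one,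
          show Finset.Icc (1:ℤ) 0 = ∅ from Finset.Icc_eq_empty (by omega),
          Finset.prod_empty, one_mul]
        refine Finset.prod_nbij' (i := fun j => 1 - j) (j := fun i => 1 - i) ?_ ?_ ?_ ?_ ?_
        · intro j hj
          simp only [Finset.mem_Icc] at hj ⊢
          omega
        · intro i hi
          simp only [Finset.mem_Icc] at hi ⊢
          omega
        · intro j _; ring
        · intro i _; ring
        · intro j _
          rw [count_nrev, count_nrev, show -(j-1) = 1 - j from by ring,
            show -j = 1 - j - 1 from by ring]
/-! ### algebra side : normal ordering in the quantum Volterra algebra -/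

noncomputable def monoL (l : List ℤ) : F := (l.map u).prod

@[simp] lemma monoL_nil : monoL [] = 1 := rfl

@[simp] lemma monoL_cons (x : ℤ) (l : List ℤ) : monoL (x :: l) = u x * monoL l := by
  simp [monoL]

lemma pi_comm1 (n : ℤ) : πa (u n * u (n+1)) = (ω : K) • πa (u (n+1) * u n) := by
  have h := RingQuot.mkAlgHom_rel K (RelA.comm1 n)
  rw [πa, h, map_smul]

lemma pi_comm2 {n m : ℤ} (h : 2 ≤ |n - m|) : πa (u n * u m) = πa (u m * u n) :=
  RingQuot.mkAlgHom_rel K (RelA.comm2 n m h)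

lemma pi_swap {x y : ℤ} (hxy : x < y) :
    πa (u x * u y) = ((ω : K) ^ (if y = x + 1 then 1 else 0)) • πa (u y * u x) := by
  by_cases h1 : y = x + 1
  · subst h1
    rw [if_pos rfl, pow_one]
    exact pi_comm1 x
  · rw [if_neg h1, pow_zero, one_smul]
    refine pi_comm2 ?_
    rw [abs_sub_comm, abs_of_nonneg (by omega : (0:ℤ) ≤ y - x)]
    omega

lemma pi_insert : ∀ (l : List ℤ), l.Pairwise (· ≥ ·) → ∀ x : ℤ,
    πa (u x * monoL l)
      = ((ω : K) ^ (l.count (x+1))) • πa (monoL (List.orderedInsert (· ≥ ·) x l)) := by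
  intro l
  induction l with
  | nil =>
    intro _ x
    simp [List.orderedInsert]
  | cons y l ih =>
    intro hs x
    show _ = _ • πa (monoL (if x ≥ y then x :: y :: l else y :: List.orderedInsert (· ≥ ·) x l))
    by_cases hxy : x ≥ y
    · rw [if_pos hxy]
      have hc : (y :: l).count (x+1) = 0 := by
        rw [List.count_eq_zero]
        intro hmem
        rcases List.mem_cons.mp hmem with h | h
        · omega
        · have := List.rel_of_pairwise_cons hs h
          omega
      rw [hc, pow_zero, one_smul]
      simp [mul_assoc]
    · rw [if_neg hxy]
      push_neg at hxy
      have h2 := ih hs.of_cons x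
      calc πa (u x * monoL (y :: l))
          = πa (u x * u y) * πa (monoL l) := by
            rw [monoL_cons, ← mul_assoc, map_mul]
        _ = ((ω : K) ^ (if y = x + 1 then 1 else 0)) • (πa (u y * u x) * πa (monoL l)) := by
            rw [pi_swap hxy, smul_mul_assoc]
        _ = ((ω : K) ^ (if y = x + 1 then 1 else 0)) • (πa (u y) * πa (u x * monoL l)) := by
            rw [map_mul, map_mul, mul_assoc]
        _ = ((ω : K) ^ (if y = x + 1 then 1 else 0)) •
              (πa (u y) * (((ω : K) ^ (l.count (x+1))) •
                πa (monoL (List.orderedInsert (· ≥ ·) x l)))) := by rw [h2]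
        _ = ((ω : K) ^ ((y :: l).count (x+1))) •
              πa (monoL (y :: List.orderedInsert (· ≥ ·) x l)) := by
            rw [mul_smul_comm, smul_smul, ← pow_add, monoL_cons, map_mul, count_cons']

lemma pi_sort : ∀ l : List ℤ,
    πa (monoL l) = ((ω : K) ^ invc l) • πa (monoL (List.insertionSort (· ≥ ·) l)) := by
  intro l
  induction l with
  | nil => simp [List.insertionSort]
  | cons x l ih =>
    show _ = _ • πa (monoL (List.orderedInsert (· ≥ ·) x (List.insertionSort (· ≥ ·) l)))
    calc πa (monoL (x :: l)) = πa (u x) * πa (monoL l) := by rw [monoL_cons, map_mul]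
      _ = πa (u x) * (((ω : K) ^ invc l) • πa (monoL (List.insertionSort (· ≥ ·) l))) := by
          rw [ih]
      _ = ((ω : K) ^ invc l) • πa (u x * monoL (List.insertionSort (· ≥ ·) l)) := by
          rw [mul_smul_comm, ← map_mul]
      _ = ((ω : K) ^ invc l) • (((ω : K) ^ ((List.insertionSort (· ≥ ·) l).count (x+1))) •
            πa (monoL (List.orderedInsert (· ≥ ·) x (List.insertionSort (· ≥ ·) l)))) := by
          rw [pi_insert _ (List.pairwise_insertionSort _ l) x]
      _ = _ := by
          rw [smul_smul, ← pow_add, invc_cons,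
            (List.perm_insertionSort (· ≥ ·) l).count_eq (x+1), add_comm]

lemma pi_perm_sorted {l L : List ℤ} (hp : l.Perm L) (hs : L.Pairwise (· ≥ ·)) :
    πa (monoL l) = ((ω : K) ^ invc l) • πa (monoL L) := by
  have h : List.insertionSort (· ≥ ·) l = L :=
    List.Perm.eq_of_pairwise' (List.pairwise_insertionSort _ l) hs
      ((List.perm_insertionSort _ l).trans hp)
  rw [pi_sort l, h]
/-! ### transfer between `Fin` tuples and lists -/

lemma nu_eq_sum {k : ℕ} (β : Fin k → ℤ) (i : ℤ) :
    nu β i = ∑ j : Fin k, if β j = i then 1 else 0 := by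
  rw [nu, Finset.card_filter]

lemma count_ofFn : ∀ {k : ℕ} (β : Fin k → ℤ) (i : ℤ), (List.ofFn β).count i = nu β i := by
  intro k
  induction k with
  | zero => intro β i; simp [nu]
  | succ k ih =>
    intro β i
    rw [List.ofFn_succ, count_cons', ih (fun j => β j.succ) i, nu_eq_sum, nu_eq_sum,
      Fin.sum_univ_succ]

lemma length_ofFn' {k : ℕ} (β : Fin k → ℤ) : (List.ofFn β).length = k := by simp

lemma ofFn_ne_nil {k : ℕ} (β : Fin (k+1) → ℤ) : List.ofFn β ≠ [] := by
  intro h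
  have := congrArg List.length h
  simp at this

lemma head_ofFn {k : ℕ} (β : Fin (k+1) → ℤ) (h : List.ofFn β ≠ []) :
    (List.ofFn β).head h = β 0 := by
  have h2 : (List.ofFn β).head? = some (β 0) := by rw [List.ofFn_succ]; rfl
  have h3 := List.head?_eq_head h
  rw [h2] at h3
  injection h3 with h4
  exact h4.symm

lemma getLast_ofFn' {k : ℕ} (β : Fin (k+1) → ℤ) (h : List.ofFn β ≠ []) :
    (List.ofFn β).getLast h = β (Fin.last k) := by
  rw [List.getLast_eq_getElem, List.getElem_ofFn]
  congr 1
  apply Fin.ext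
  simp [Fin.last]

lemma chain'_ofFn_iff {n : ℕ} (β : Fin n → ℤ) :
    List.IsChain (fun p z => p ≤ z + 1) (List.ofFn β) ↔
      ∀ i : Fin n, ∀ h : (i:ℕ)+1 < n, β i ≤ β ⟨(i:ℕ)+1, h⟩ + 1 := by
  rw [List.isChain_iff_getElem]
  simp only [List.getElem_ofFn, List.length_ofFn]
  constructor
  · intro h i hi
    exact h i hi
  · intro h i hi
    exact h ⟨i, by omega⟩ hi

lemma fin_chain_bound {n : ℕ} (β : Fin n → ℤ)
    (hc : ∀ i : Fin n, ∀ h : (i:ℕ)+1 < n, β i ≤ β ⟨(i:ℕ)+1, h⟩ + 1) :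
    ∀ (d : ℕ) (i j : Fin n), (j:ℕ) = (i:ℕ) + d → β i ≤ β j + d := by
  intro d
  induction d with
  | zero =>
    intro i j hij
    have : i = j := Fin.ext (by omega)
    subst this
    simp
  | succ d ihd =>
    intro i j hij
    have hi1 : (i:ℕ)+1 < n := by have := j.isLt; omega
    have h1 := hc i hi1
    have h2 := ihd ⟨(i:ℕ)+1, hi1⟩ j (by simp; omega)
    have : ((d+1 : ℕ) : ℤ) = (d:ℤ) + 1 := by push_cast; ring
    rw [this]
    omega

lemma adm_iff_good {k : ℕ} (β : Fin (k+1) → ℤ) :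
    β ∈ Adm (k+1) ↔ Good 1 (List.ofFn β) := by
  have hne := ofFn_ne_nil β
  rw [good_iff _ hne 1, head_ofFn β hne, getLast_ofFn' β hne, chain'_ofFn_iff]
  constructor
  · rintro ⟨h1, h2⟩
    refine ⟨?_, h2, ?_⟩
    · have := (h1 0).1
      simpa using this
    · have := (h1 (Fin.last k)).2
      simp only [Fin.val_last] at this
      push_cast at this
      omega
  · rintro ⟨h1, h2, h3⟩
    refine ⟨?_, h2⟩
    intro j
    constructor
    · have hb := fin_chain_bound β h2 (j:ℕ) 0 j (by simp)
      omega
    · have hb := fin_chain_bound β h2 (k - (j:ℕ)) j (Fin.last k)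
        (by simp only [Fin.val_last]; omega)
      have hj := j.isLt
      have hcast : ((k - (j:ℕ) : ℕ) : ℤ) = (k:ℤ) - (j:ℕ) := by omega
      rw [hcast] at hb
      push_cast
      omega

lemma noninc_sorted {k : ℕ} (β : Fin (k+1) → ℤ) (h : β ∈ Noninc (k+1)) :
    (List.ofFn β).Pairwise (· ≥ ·) := by
  have mono : ∀ (d : ℕ) (i j : Fin (k+1)), (j:ℕ) = (i:ℕ) + d → β j ≤ β i := by
    intro d
    induction d with
    | zero =>
      intro i j hij
      have : i = j := Fin.ext (by omega)
      subst this
      simp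
    | succ d ihd =>
      intro i j hij
      have hi1 : (i:ℕ)+1 < k+1 := by have := j.isLt; omega
      have h1 := (h i hi1).1
      have h2 := ihd ⟨(i:ℕ)+1, hi1⟩ j (by simp; omega)
      omega
  rw [List.pairwise_iff_get]
  intro i j hij
  rw [List.get_ofFn, List.get_ofFn]
  exact mono ((j:ℕ) - (i:ℕ)) _ _ (by simp; omega)

/-! ### conclusion -/

lemma stmt0_aux (k : ℕ) (α : Fin (k+1) → ℤ)
    (hα : α ∈ Adm (k+1) ∩ Noninc (k+1)) :
    πa (∑ᶠ β ∈ {β : Fin (k+1) → ℤ | β ∈ Adm (k+1) ∧ ∀ i : ℤ, nu β i = nu α i},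
          mono β)
      = P α • πa (mono α) := by
  obtain ⟨hadm, hnon⟩ := hα
  have hLne : List.ofFn α ≠ [] := ofFn_ne_nil α
  have hsort : (List.ofFn α).Pairwise (· ≥ ·) := noninc_sorted α hnon
  have hgood : Good 1 (List.ofFn α) := (adm_iff_good α).mp hadm
  have hmono : ∀ (β : Fin (k+1) → ℤ), mono β = monoL (List.ofFn β) := by
    intro β
    rw [mono, monoL, List.map_ofFn]
    rfl
  -- the index set as the image of `BigSet (ofFn α)`
  have hSet : {β : Fin (k+1) → ℤ | β ∈ Adm (k+1) ∧ ∀ i : ℤ, nu β i = nu α i}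
      = ↑((BigSet (List.ofFn α)).image
          (fun (l : List ℤ) (j : Fin (k+1)) => l.getD (j:ℕ) 0)) := by
    ext β
    simp only [Set.mem_setOf_eq, Finset.coe_image, Set.mem_image, Finset.mem_coe]
    constructor
    · rintro ⟨hadmβ, hnu⟩
      refine ⟨List.ofFn β, ?_, ?_⟩
      · rw [mem_BigSet]
        refine ⟨List.perm_iff_count.mpr fun i => ?_, (adm_iff_good β).mp hadmβ⟩
        rw [count_ofFn, count_ofFn, hnu i]
      · funext j
        rw [List.getD_eq_getElem _ _ (by simp; omega), List.getElem_ofFn]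
    · rintro ⟨l, hl, rfl⟩
      have hmem := mem_BigSet.mp hl
      have hlen : l.length = k+1 := by
        have := hmem.1.length_eq
        simpa using this
      have hofFn : List.ofFn (fun j : Fin (k+1) => l.getD (j:ℕ) 0) = l := by
        apply List.ext_get (by simp [hlen])
        intro m h1 h2
        rw [List.get_ofFn]
        exact List.getD_eq_getElem _ _ (by simp; omega)
      constructor
      · rw [adm_iff_good, hofFn]
        exact hmem.2
      · intro i
        rw [← count_ofFn, hofFn, ← count_ofFn α, hmem.1.count_eq]
  rw [hSet, finsum_mem_coe_finset, map_sum]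
  have hinj : ∀ l1 ∈ BigSet (List.ofFn α), ∀ l2 ∈ BigSet (List.ofFn α),
      (fun (l : List ℤ) (j : Fin (k+1)) => l.getD (j:ℕ) 0) l1
        = (fun (l : List ℤ) (j : Fin (k+1)) => l.getD (j:ℕ) 0) l2 → l1 = l2 := by
    intro l1 h1 l2 h2 heq
    have hlen1 : l1.length = k+1 := by
      have := (mem_BigSet.mp h1).1.length_eq; simpa using this
    have hlen2 : l2.length = k+1 := by
      have := (mem_BigSet.mp h2).1.length_eq; simpa using this
    apply List.ext_get (by omega)
    intro m hm1 hm2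
    have := congrFun heq ⟨m, by omega⟩
    simp only at this
    rw [List.getD_eq_getElem l1 0 (by omega : m < l1.length),
      List.getD_eq_getElem l2 0 (by omega : m < l2.length)] at this
    exact this
  rw [Finset.sum_image hinj]
  have hterm : ∀ l ∈ BigSet (List.ofFn α),
      πa (mono (fun j : Fin (k+1) => l.getD (j:ℕ) 0))
        = ((ω : K) ^ invc l) • πa (monoL (List.ofFn α)) := by
    intro l hl
    have hmem := mem_BigSet.mp hl
    have hlen : l.length = k+1 := by
      have := hmem.1.length_eq; simpa using this
    have hofFn : List.ofFn (fun j : Fin (k+1) => l.getD (j:ℕ) 0) = l := by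
      apply List.ext_get (by simp [hlen])
      intro m h1 h2
      rw [List.get_ofFn]
      exact List.getD_eq_getElem _ _ (by simp; omega)
    rw [hmono, hofFn]
    exact pi_perm_sorted hmem.1 hsort
  rw [Finset.sum_congr rfl hterm, ← Finset.sum_smul]
  have hpeel := peel (2 * (List.ofFn α).length + 1) (List.ofFn α) (α 0) (α (Fin.last k))
    hLne (by split_ifs <;> omega) (head_ofFn α hLne) (getLast_ofFn' α hLne) hsort hgood
  rw [hpeel, hmono α]
  congr 1
  rw [P, if_pos ⟨hadm, hnon⟩]
  congr 1
  · refine Finset.prod_congr rfl fun i _ => ?_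
    rw [Sq_eq, count_ofFn, count_ofFn]
  · refine Finset.prod_congr rfl fun i _ => ?_
    rw [Sq_eq, count_ofFn, count_ofFn, add_comm (nu α (i-1)) (nu α i)]

end QV

/-- the sum of all admissible monomials similar to `u_α`
projects in the quantum Volterra algebra `A_a` to `P_α(ω) · π_a(u_α)`. -/
theorem stmt0 (k : ℕ) (α : Fin (k+1) → ℤ)
    (hα : α ∈ Adm (k+1) ∩ Noninc (k+1)) :
    πa (∑ᶠ β ∈ {β : Fin (k+1) → ℤ | β ∈ Adm (k+1) ∧ ∀ i : ℤ, nu β i = nu α i},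
          mono β)
      = P α • πa (mono α) :=
  QV.stmt0_aux k α hα
end
end

section
/- For every k ≥ 1 and every nonincreasing tuple α ∈ 𝒵^k, the following identity of rational functions in ω holds: P_α(ω) + ω^{ν(α,0)} P_{α−1}(ω) = P_{α−1}(ω) + ω^{ν(α,1)} P_α(ω), where α−1 denotes the entrywise shift of α by −1. -/
noncomputable section
open scoped BigOperators Classical

/-!
For `a, b ≥ 1` both `[a+b-1 choose a]_ω (1 - ω^a)` and `[a+b-1 choose b]_ω (1 - ω^b)` equal
`[a+b-1]_ω! / ([a-1]_ω! [b-1]_ω!)`, so the Gaussian binomials satisfy the symmetry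
`[a+b-1 choose a]_ω (1 - ω^a) = [a+b-1 choose b]_ω (1 - ω^b)` for all `a, b`.
When `α_1 ≥ 1 ≥ 1 + α_k`, the products defining `P_α` and `P_{α-1}` share all factors except one:
`P_α` has the factor `[κ_1+κ_0-1 choose κ_1]` at `i = 1` and `P_{α-1}` has `[κ_1+κ_0-1 choose κ_0]`,
so the symmetry gives `P_α (1 - ω^{κ_1}) = P_{α-1} (1 - ω^{κ_0})`, which is the claimed identity.
In the remaining cases one of `κ_0, κ_1` vanishes together with the matching `P`.
-/

lemma one_sub_ω_pow_succ_ne_zero (n : ℕ) : (1 : K) - ω ^ (n + 1) ≠ 0 := by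
  have h : (1 : K) - ω ^ (n + 1) = algebraMap (Polynomial ℂ) K (1 - Polynomial.X ^ (n + 1)) := by
    simp [ω, RatFunc.algebraMap_X]
  rw [h]
  refine RatFunc.algebraMap_ne_zero fun h' => ?_
  simpa [Polynomial.coeff_X_pow] using congrArg (Polynomial.coeff · 0) h'

/-- Differs from the usual `ω`-factorial by the factor `(1 - ω)^n`. -/
def qFactorial (n : ℕ) : K := ∏ s ∈ Finset.range n, (1 - ω ^ (s + 1))

lemma qFactorial_ne_zero (n : ℕ) : qFactorial n ≠ 0 :=
  Finset.prod_ne_zero_iff.2 fun s _ => one_sub_ω_pow_succ_ne_zero s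

lemma qFactorial_succ (n : ℕ) : qFactorial (n + 1) = qFactorial n * (1 - ω ^ (n + 1)) :=
  Finset.prod_range_succ _ _

lemma prod_range_one_sub_ω_pow_mul_qFactorial {m r : ℕ} (h : r ≤ m) :
    (∏ s ∈ Finset.range r, (1 - ω ^ (m - s))) * qFactorial (m - r) = qFactorial m := by
  induction r with
  | zero => simp
  | succ r ih =>
    have hm : m - r = m - (r + 1) + 1 := by omega
    rw [← ih (by omega), hm, qFactorial_succ, Finset.prod_range_succ, hm]
    ring

lemma gbinom_eq_div {m r : ℕ} (h : r ≤ m) :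
    gbinom m r = qFactorial m / (qFactorial r * qFactorial (m - r)) := by
  rw [gbinom, Finset.prod_div_distrib, ← prod_range_one_sub_ω_pow_mul_qFactorial h,
    mul_div_mul_right _ _ (qFactorial_ne_zero _)]
  rfl

lemma gbinom_eq_zero_of_lt {m r : ℕ} (h : m < r) : gbinom m r = 0 :=
  Finset.prod_eq_zero (Finset.mem_range.2 h) (by simp)

lemma gbinom_succ_mul_one_sub_ω_pow (a b : ℕ) :
    gbinom (a + b + 1) (a + 1) * (1 - ω ^ (a + 1)) =
      qFactorial (a + b + 1) / (qFactorial a * qFactorial b) := by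
  rw [gbinom_eq_div (by omega), show a + b + 1 - (a + 1) = b by omega, qFactorial_succ a]
  have := one_sub_ω_pow_succ_ne_zero a
  field_simp

lemma gbinom_mul_one_sub_ω_pow_comm (a b : ℕ) :
    gbinom (a + b - 1) a * (1 - ω ^ a) = gbinom (a + b - 1) b * (1 - ω ^ b) := by
  rcases a with _ | a <;> rcases b with _ | b
  · simp
  · simp [gbinom_eq_zero_of_lt]
  · simp [gbinom_eq_zero_of_lt]
  · have h := gbinom_succ_mul_one_sub_ω_pow
    rw [show a + 1 + (b + 1) - 1 = a + b + 1 by omega, h, show a + b + 1 = b + a + 1 by omega, h,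
      mul_comm]

lemma Finset.prod_Icc_add' {ι M : Type*} [CommMonoid M] [AddCommMonoid ι] [PartialOrder ι]
    [IsOrderedCancelAddMonoid ι] [ExistsAddOfLE ι] [LocallyFiniteOrder ι] (f : ι → M) (a b c : ι) :
    ∏ x ∈ Finset.Icc a b, f (x + c) = ∏ x ∈ Finset.Icc (a + c) (b + c), f x := by
  rw [← Finset.map_add_right_Icc, Finset.prod_map]
  rfl

lemma nu_shift {k : ℕ} (α : Fin k → ℤ) (m i : ℤ) : nu (shift α m) i = nu α (i - m) := by
  unfold nu shift
  congr 1
  exact Finset.filter_congr fun j _ => by omega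

lemma nu_eq_zero {k : ℕ} {α : Fin k → ℤ} {i : ℤ} (h : ∀ j, α j ≠ i) : nu α i = 0 :=
  Finset.card_eq_zero.2 (Finset.filter_eq_empty_iff.2 fun j _ => h j)

lemma shift_mem_noninc {k : ℕ} {α : Fin k → ℤ} (hα : α ∈ Noninc k) (m : ℤ) :
    shift α m ∈ Noninc k := fun i h => by
  have := hα i h
  simp only [shift]
  omega

lemma le_and_le_add_of_mem_noninc {k : ℕ} {α : Fin k → ℤ} (hα : α ∈ Noninc k) {i j : Fin k}
    (hij : i ≤ j) : α j ≤ α i ∧ α i ≤ α j + (j : ℕ) - (i : ℕ) := by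
  obtain ⟨n, hn⟩ : ∃ n, (j : ℕ) = i + n := ⟨j - i, by omega⟩
  induction n generalizing j with
  | zero => simp [Fin.ext (show (j : ℕ) = i by omega)]
  | succ n ih =>
    have hlt : (i : ℕ) + n + 1 < k := by omega
    have hprev := ih (j := ⟨i + n, by omega⟩) (Fin.mk_le_mk.2 (by omega)) rfl
    have hstep := hα ⟨i + n, by omega⟩ hlt
    obtain rfl : j = ⟨i + n + 1, hlt⟩ := Fin.ext hn
    simp only at hprev hstep ⊢
    omega

lemma mem_adm_of_mem_noninc {k : ℕ} {α : Fin (k + 1) → ℤ} (hα : α ∈ Noninc (k + 1))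
    (h0 : 0 ≤ α 0) (hlast : α (Fin.last k) ≤ 0) : α ∈ Adm (k + 1) := by
  refine ⟨fun j => ?_, fun i h => (hα i h).2⟩
  have hfirst := (le_and_le_add_of_mem_noninc hα (Fin.zero_le j)).2
  have hlast' := (le_and_le_add_of_mem_noninc hα (Fin.le_last j)).2
  have := j.isLt
  simp only [Fin.val_zero, Fin.val_last] at hfirst hlast'
  push_cast [Nat.cast_sub (Nat.lt_succ_iff.1 this)] at hfirst hlast' ⊢
  omega

lemma P_eq_zero_of_neg {k : ℕ} {α : Fin (k + 1) → ℤ} (h : α 0 < 0) : P α = 0 :=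
  if_neg fun hα => by simpa using (hα.1.1 0).1.trans_lt h

lemma P_eq_zero_of_pos_last {k : ℕ} {α : Fin (k + 1) → ℤ} (h : 0 < α (Fin.last k)) : P α = 0 :=
  if_neg fun hα => by simpa using ((hα.1.1 (Fin.last k)).2.trans_lt' h)

lemma nu_eq_zero_of_apply_zero_lt {k : ℕ} {α : Fin (k + 1) → ℤ} (hα : α ∈ Noninc (k + 1)) {i : ℤ}
    (h : α 0 < i) : nu α i = 0 :=
  nu_eq_zero fun j => ((le_and_le_add_of_mem_noninc hα (Fin.zero_le j)).1.trans_lt h).ne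

lemma nu_eq_zero_of_lt_apply_last {k : ℕ} {α : Fin (k + 1) → ℤ} (hα : α ∈ Noninc (k + 1)) {i : ℤ}
    (h : i < α (Fin.last k)) : nu α i = 0 :=
  nu_eq_zero fun j => (h.trans_le (le_and_le_add_of_mem_noninc hα (Fin.le_last j)).1).ne'

section Factors

variable {k : ℕ} (α : Fin (k + 1) → ℤ)

def upperFactor (i : ℤ) : K := gbinom (nu α i + nu α (i - 1) - 1) (nu α i)

def lowerFactor (i : ℤ) : K := gbinom (nu α i + nu α (i - 1) - 1) (nu α (i - 1))

lemma upperFactor_shift (m i : ℤ) : upperFactor (shift α m) i = upperFactor α (i - m) := by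
  simp only [upperFactor, nu_shift, sub_right_comm i 1 m]

lemma lowerFactor_shift (m i : ℤ) : lowerFactor (shift α m) i = lowerFactor α (i - m) := by
  simp only [lowerFactor, nu_shift, sub_right_comm i 1 m]

variable {α}

lemma P_eq_prod (hα : α ∈ Noninc (k + 1)) (h0 : 0 ≤ α 0) (hlast : α (Fin.last k) ≤ 0) :
    P α = (∏ i ∈ Finset.Icc 1 (α 0), upperFactor α i) *
      ∏ i ∈ Finset.Icc (α (Fin.last k) + 1) 0, lowerFactor α i :=
  if_pos ⟨mem_adm_of_mem_noninc hα h0 hlast, hα⟩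

lemma P_eq_upperFactor_one_mul (hα : α ∈ Noninc (k + 1)) (h0 : 1 ≤ α 0)
    (hlast : α (Fin.last k) ≤ 0) :
    P α = upperFactor α 1 * ((∏ i ∈ Finset.Icc 2 (α 0), upperFactor α i) *
      ∏ i ∈ Finset.Icc (α (Fin.last k) + 1) 0, lowerFactor α i) := by
  rw [P_eq_prod hα (by omega) hlast, ← Finset.insert_Icc_succ_left_eq_Icc h0,
    Finset.prod_insert (by simp), Order.succ_eq_add_one, mul_assoc]
  rfl

lemma P_shift_neg_one_eq_mul_lowerFactor_one (hα : α ∈ Noninc (k + 1)) (h0 : 1 ≤ α 0)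
    (hlast : α (Fin.last k) ≤ 0) :
    P (shift α (-1)) = ((∏ i ∈ Finset.Icc 2 (α 0), upperFactor α i) *
      ∏ i ∈ Finset.Icc (α (Fin.last k) + 1) 0, lowerFactor α i) * lowerFactor α 1 := by
  have hsplit := Finset.insert_Icc_right_eq_Icc_succ (a := α (Fin.last k) + 1) (b := (0 : ℤ))
    (by simpa using hlast)
  rw [Order.succ_eq_add_one, zero_add] at hsplit
  rw [P_eq_prod (shift_mem_noninc hα _) (by simp [shift]; omega) (by simp [shift]; omega)]
  simp only [upperFactor_shift, lowerFactor_shift, shift, sub_neg_eq_add]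
  rw [Finset.prod_Icc_add', Finset.prod_Icc_add', neg_add_cancel_right, neg_add_cancel_right,
    one_add_one_eq_two, zero_add]
  rw [← hsplit, Finset.prod_insert (by simp), mul_comm (lowerFactor α 1), mul_assoc]

end Factors

lemma upperFactor_one_mul_one_sub_ω_pow {k : ℕ} (α : Fin (k + 1) → ℤ) :
    upperFactor α 1 * (1 - ω ^ nu α 1) = lowerFactor α 1 * (1 - ω ^ nu α 0) := by
  simpa [upperFactor, lowerFactor] using gbinom_mul_one_sub_ω_pow_comm (nu α 1) (nu α 0)

lemma P_mul_one_sub_ω_pow_nu_one {k : ℕ} {α : Fin (k + 1) → ℤ} (hα : α ∈ Noninc (k + 1)) :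
    P α * (1 - ω ^ nu α 1) = P (shift α (-1)) * (1 - ω ^ nu α 0) := by
  rcases le_or_gt (α 0) 0 with h0 | h0
  · rw [nu_eq_zero_of_apply_zero_lt hα (by omega),
      P_eq_zero_of_neg (α := shift α (-1)) (by simp [shift]; omega)]
    simp
  rcases lt_or_ge 0 (α (Fin.last k)) with hlast | hlast
  · rw [nu_eq_zero_of_lt_apply_last hα hlast, P_eq_zero_of_pos_last hlast]
    simp
  rw [P_eq_upperFactor_one_mul hα h0 hlast, P_shift_neg_one_eq_mul_lowerFactor_one hα h0 hlast]
  linear_combination (∏ i ∈ Finset.Icc 2 (α 0), upperFactor α i) *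
    (∏ i ∈ Finset.Icc (α (Fin.last k) + 1) 0, lowerFactor α i) *
    upperFactor_one_mul_one_sub_ω_pow α

/-- the key identity for the polynomials `P_α`. -/
theorem stmt2 (k : ℕ) (α : Fin (k+1) → ℤ) (hα : α ∈ Noninc (k+1)) :
    P α + ω ^ (nu α 0) * P (shift α (-1))
      = P (shift α (-1)) + ω ^ (nu α 1) * P α := by
  linear_combination P_mul_one_sub_ω_pow_nu_one hα
end
end

section
/- Let ℓ ≥ 1 and let α ∈ 𝒵^ℓ be a nonincreasing tuple with ν(α,1) = ν(α,−1). Then P_{α+1}(ω) = P_{α−1}(ω), where α±1 denote the entrywise shifts of α by ±1. -/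
noncomputable section
open scoped BigOperators Classical

lemma Icc_eq_Ioc (a b : ℤ) : Finset.Icc a b = Finset.Ioc (a-1) b := by
  ext x
  simp only [Finset.mem_Icc, Finset.mem_Ioc]
  omega

lemma prod_Icc_split (f : ℤ → K) {a b c : ℤ} (h1 : a - 1 ≤ b) (h2 : b ≤ c) :
    ∏ i ∈ Finset.Icc a c, f i
      = (∏ i ∈ Finset.Icc a b, f i) * ∏ i ∈ Finset.Icc (b+1) c, f i := by
  rw [Icc_eq_Ioc, Icc_eq_Ioc a b, Icc_eq_Ioc (b+1) c, add_sub_cancel_right,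
    ← Finset.prod_union (by
      rw [Finset.disjoint_left]
      intro x hx hy
      simp only [Finset.mem_Ioc] at hx hy
      omega),
    Finset.Ioc_union_Ioc_eq_Ioc h1 h2]

lemma prod_Icc_shift (f : ℤ → K) (a b c : ℤ) :
    ∏ i ∈ Finset.Icc a b, f (i + c) = ∏ i ∈ Finset.Icc (a+c) (b+c), f i := by
  rw [← Finset.map_add_right_Icc, Finset.prod_map]
  rfl

lemma prod_Icc_shift' (f : ℤ → K) (a b c : ℤ) :
    ∏ i ∈ Finset.Icc a b, f (i - c) = ∏ i ∈ Finset.Icc (a-c) (b-c), f i := by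
  simpa [sub_eq_add_neg] using prod_Icc_shift f a b (-c)

lemma prod_Icc_pair (f : ℤ → K) : ∏ i ∈ Finset.Icc (0:ℤ) 1, f i = f 0 * f 1 := by
  have h : Finset.Icc (0:ℤ) 1 = {0, 1} := by
    ext x
    simp only [Finset.mem_Icc, Finset.mem_insert, Finset.mem_singleton]
    omega
  rw [h, Finset.prod_pair (by norm_num)]

lemma noninc_chain {k : ℕ} {α : Fin k → ℤ} (hα : α ∈ Noninc k) :
    ∀ (m n : ℕ) (hmn : m ≤ n) (hn : n < k),
      α ⟨n, hn⟩ ≤ α ⟨m, lt_of_le_of_lt hmn hn⟩ ∧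
      α ⟨m, lt_of_le_of_lt hmn hn⟩ ≤ α ⟨n, hn⟩ + ((n : ℤ) - (m : ℤ)) := by
  intro m n
  induction n with
  | zero =>
    intro hmn hn
    interval_cases m
    simp
  | succ n ih =>
    intro hmn hn
    rcases Nat.lt_or_ge m (n+1) with hm | hm
    · have hmn' : m ≤ n := Nat.lt_succ_iff.mp hm
      have hn' : n < k := Nat.lt_of_succ_lt hn
      obtain ⟨h1, h2⟩ := ih hmn' hn'
      have hstep : α ⟨n+1, hn⟩ ≤ α ⟨n, hn'⟩ ∧ α ⟨n, hn'⟩ ≤ α ⟨n+1, hn⟩ + 1 := hα ⟨n, hn'⟩ hn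
      constructor
      · exact le_trans hstep.1 h1
      · have := le_trans h2 (by linarith [hstep.2] :
          α ⟨n, hn'⟩ + ((n:ℤ) - m) ≤ α ⟨n+1, hn⟩ + 1 + ((n:ℤ) - m))
        push_cast
        linarith
    · have hmeq : m = n + 1 := le_antisymm hmn hm
      subst hmeq
      simp

lemma noninc_ivt {k : ℕ} {α : Fin k → ℤ} (hα : α ∈ Noninc k) :
    ∀ (m n : ℕ) (hmn : m ≤ n) (hn : n < k) (v : ℤ),
      α ⟨n, hn⟩ ≤ v → v ≤ α ⟨m, lt_of_le_of_lt hmn hn⟩ → ∃ j, α j = v := by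
  intro m n
  induction n with
  | zero =>
    intro hmn hn v h1 h2
    interval_cases m
    exact ⟨⟨0, hn⟩, le_antisymm h1 h2⟩
  | succ n ih =>
    intro hmn hn v h1 h2
    rcases Nat.lt_or_ge m (n+1) with hm | hm
    · have hmn' : m ≤ n := Nat.lt_succ_iff.mp hm
      have hn' : n < k := Nat.lt_of_succ_lt hn
      have hstep : α ⟨n+1, hn⟩ ≤ α ⟨n, hn'⟩ ∧ α ⟨n, hn'⟩ ≤ α ⟨n+1, hn⟩ + 1 := hα ⟨n, hn'⟩ hn
      rcases le_or_gt (α ⟨n, hn'⟩) v with hv | hv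
      · exact ih hmn' hn' v hv h2
      · refine ⟨⟨n+1, hn⟩, ?_⟩
        omega
    · have hmeq : m = n + 1 := le_antisymm hmn hm
      subst hmeq
      exact ⟨⟨n+1, hn⟩, le_antisymm h1 h2⟩

/-- `A`-type factor of `P`. -/
noncomputable def Af {k : ℕ} (α : Fin k → ℤ) (i : ℤ) : K :=
  gbinom (nu α i + nu α (i-1) - 1) (nu α i)

/-- `B`-type factor of `P`. -/
noncomputable def Bf {k : ℕ} (α : Fin k → ℤ) (i : ℤ) : K :=
  gbinom (nu α i + nu α (i-1) - 1) (nu α (i-1))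

lemma P_eq {k : ℕ} (α : Fin (k+1) → ℤ) (m : ℤ)
    (hmem : shift α m ∈ Adm (k+1) ∩ Noninc (k+1)) :
    P (shift α m) = (∏ i ∈ Finset.Icc (1 - m) (α 0), Af α i) *
      (∏ i ∈ Finset.Icc (α (Fin.last k) + 1) (-m), Bf α i) := by
  unfold P
  rw [if_pos hmem]
  have h0 : shift α m 0 = α 0 + m := rfl
  have hl : shift α m (Fin.last k) = α (Fin.last k) + m := rfl
  rw [h0, hl]
  congr 1
  · calc (∏ i ∈ Finset.Icc (1:ℤ) (α 0 + m),
        gbinom (nu (shift α m) i + nu (shift α m) (i-1) - 1) (nu (shift α m) i))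
        = ∏ i ∈ Finset.Icc (1:ℤ) (α 0 + m), Af α (i - m) := by
          apply Finset.prod_congr rfl
          intro i _
          have hh : i - 1 - m = i - m - 1 := by ring
          rw [nu_shift, nu_shift, hh]
          rfl
      _ = ∏ i ∈ Finset.Icc ((1:ℤ) - m) (α 0 + m - m), Af α i := prod_Icc_shift' (Af α) 1 (α 0 + m) m
      _ = ∏ i ∈ Finset.Icc ((1:ℤ) - m) (α 0), Af α i := by rw [add_sub_cancel_right]
  · calc (∏ i ∈ Finset.Icc (α (Fin.last k) + m + 1) (0:ℤ),
        gbinom (nu (shift α m) i + nu (shift α m) (i-1) - 1) (nu (shift α m) (i-1)))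
        = ∏ i ∈ Finset.Icc (α (Fin.last k) + m + 1) (0:ℤ), Bf α (i - m) := by
          apply Finset.prod_congr rfl
          intro i _
          have hh : i - 1 - m = i - m - 1 := by ring
          rw [nu_shift, nu_shift, hh]
          rfl
      _ = ∏ i ∈ Finset.Icc (α (Fin.last k) + m + 1 - m) ((0:ℤ) - m), Bf α i :=
          prod_Icc_shift' (Bf α) _ _ m
      _ = ∏ i ∈ Finset.Icc (α (Fin.last k) + 1) (-m), Bf α i := by
          rw [show α (Fin.last k) + m + 1 - m = α (Fin.last k) + 1 by ring, zero_sub]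

/-- if `ν(α,1) = ν(α,−1)` then `P_{α+1} = P_{α−1}`. -/
theorem stmt3 (l : ℕ) (α : Fin (l+1) → ℤ) (hα : α ∈ Noninc (l+1))
    (h : nu α 1 = nu α (-1)) :
    P (shift α 1) = P (shift α (-1)) := by
  have h0eq : (0 : Fin (l+1)) = ⟨0, Nat.succ_pos l⟩ := by
    ext; simp
  have hleq : Fin.last l = ⟨l, Nat.lt_succ_self l⟩ := rfl
  -- bounds from monotonicity
  have hub : ∀ j : Fin (l+1), α j ≤ α 0 := by
    intro j
    have := (noninc_chain hα 0 j.val (Nat.zero_le _) j.isLt).1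
    rw [h0eq]
    simpa using this
  have hlb : ∀ j : Fin (l+1), α (Fin.last l) ≤ α j := by
    intro j
    have := (noninc_chain hα j.val l (Nat.le_of_lt_succ j.isLt) (Nat.lt_succ_self l)).1
    rw [hleq]
    simpa using this
  have hup : ∀ j : Fin (l+1), α 0 ≤ α j + (j.val : ℤ) := by
    intro j
    have := (noninc_chain hα 0 j.val (Nat.zero_le _) j.isLt).2
    rw [h0eq]
    simpa using this
  have hdn : ∀ j : Fin (l+1), α j ≤ α (Fin.last l) + ((l : ℤ) - (j.val : ℤ)) := by
    intro j
    have := (noninc_chain hα j.val l (Nat.le_of_lt_succ j.isLt) (Nat.lt_succ_self l)).2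
    rw [hleq]
    simpa using this
  -- vanishing / positivity of nu
  have hnu_hi : ∀ v : ℤ, α 0 < v → nu α v = 0 := by
    intro v hv
    unfold nu
    rw [Finset.card_eq_zero, Finset.filter_eq_empty_iff]
    intro j _
    have := hub j
    omega
  have hnu_lo : ∀ v : ℤ, v < α (Fin.last l) → nu α v = 0 := by
    intro v hv
    unfold nu
    rw [Finset.card_eq_zero, Finset.filter_eq_empty_iff]
    intro j _
    have := hlb j
    omega
  have hnu_pos : ∀ v : ℤ, α (Fin.last l) ≤ v → v ≤ α 0 → 0 < nu α v := by
    intro v h1 h2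
    obtain ⟨j, hj⟩ := noninc_ivt hα 0 l (Nat.zero_le l) (Nat.lt_succ_self l) v
      (by rw [hleq] at h1; exact h1) (by rw [h0eq] at h2; exact h2)
    unfold nu
    rw [Finset.card_pos]
    exact ⟨j, by simp [hj]⟩
  -- shifted tuples stay nonincreasing
  have hnon : ∀ m : ℤ, shift α m ∈ Noninc (l+1) := by
    intro m i hi
    have := hα i hi
    simp only [shift]
    omega
  -- admissibility characterization for shifts
  have hadm_of : ∀ m : ℤ, 0 ≤ α 0 + m → α (Fin.last l) + m ≤ 0 → shift α m ∈ Adm (l+1) := by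
    intro m hm0 hml
    constructor
    · intro j
      have hu := hup j
      have hd := hdn j
      simp only [shift]
      constructor
      · omega
      · push_cast
        omega
    · intro i hi
      exact (hnon m i hi).2
  have hadm_to : ∀ m : ℤ, shift α m ∈ Adm (l+1) → 0 ≤ α 0 + m ∧ α (Fin.last l) + m ≤ 0 := by
    intro m hm
    have h1 := (hm.1 0).1
    have h2 := (hm.1 (Fin.last l)).2
    simp only [shift, Fin.val_zero, Fin.val_last] at h1 h2
    push_cast at h1 h2
    constructor
    · omega
    · omega
  by_cases hc : 1 ≤ α 0 ∧ α (Fin.last l) ≤ -1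
  · -- main case: both shifts admissible
    obtain ⟨hc1, hc2⟩ := hc
    have hmem1 : shift α 1 ∈ Adm (l+1) ∩ Noninc (l+1) :=
      ⟨hadm_of 1 (by omega) (by omega), hnon 1⟩
    have hmem2 : shift α (-1) ∈ Adm (l+1) ∩ Noninc (l+1) :=
      ⟨hadm_of (-1) (by omega) (by omega), hnon (-1)⟩
    rw [P_eq α 1 hmem1, P_eq α (-1) hmem2]
    rw [show (1:ℤ) - 1 = 0 by norm_num, show (1:ℤ) - (-1) = 2 by norm_num,
      show -(1:ℤ) = -1 by norm_num, show -(-1:ℤ) = 1 by norm_num]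
    rw [prod_Icc_split (Af α) (by norm_num : (0:ℤ) - 1 ≤ 1) hc1]
    rw [prod_Icc_split (Bf α) (by omega : α (Fin.last l) + 1 - 1 ≤ -1) (by norm_num : (-1:ℤ) ≤ 1)]
    rw [show (-1:ℤ) + 1 = 0 by norm_num, show (1:ℤ) + 1 = 2 by norm_num]
    rw [prod_Icc_pair (Af α), prod_Icc_pair (Bf α)]
    have key : Af α 0 * Af α 1 = Bf α 0 * Bf α 1 := by
      unfold Af Bf
      norm_num
      rw [h, Nat.add_comm (nu α (-1)) (nu α 0)]
      ring
    calc (Af α 0 * Af α 1 * ∏ i ∈ Finset.Icc (2:ℤ) (α 0), Af α i) *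
          ∏ i ∈ Finset.Icc (α (Fin.last l) + 1) (-1:ℤ), Bf α i
        = (∏ i ∈ Finset.Icc (2:ℤ) (α 0), Af α i) *
          ((∏ i ∈ Finset.Icc (α (Fin.last l) + 1) (-1:ℤ), Bf α i) * (Bf α 0 * Bf α 1)) := by
          rw [← key]; ring
      _ = _ := rfl
  · -- degenerate case: both shifts non-admissible
    have hn1 : shift α 1 ∉ Adm (l+1) := by
      intro hmem
      obtain ⟨ha, hb⟩ := hadm_to 1 hmem
      -- α 0 ≥ -1, α last ≤ -1; negation of hc forces α 0 ≤ 0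
      have hα0 : α 0 ≤ 0 := by
        by_contra hcon
        exact hc ⟨by omega, by omega⟩
      have hz : nu α 1 = 0 := hnu_hi 1 (by omega)
      have hp : 0 < nu α (-1) := hnu_pos (-1) (by omega) (by omega)
      omega
    have hn2 : shift α (-1) ∉ Adm (l+1) := by
      intro hmem
      obtain ⟨ha, hb⟩ := hadm_to (-1) hmem
      -- α 0 ≥ 1, α last ≤ 1; negation of hc forces α last ≥ 0
      have hαl : 0 ≤ α (Fin.last l) := by
        by_contra hcon
        exact hc ⟨by omega, by omega⟩
      have hz : nu α (-1) = 0 := hnu_lo (-1) (by omega)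
      have hp : 0 < nu α 1 := hnu_pos 1 (by omega) (by omega)
      omega
    unfold P
    rw [if_neg (fun hmem => hn1 hmem.1), if_neg (fun hmem => hn2 hmem.1)]
end
end

section
/- For every integer k ≥ 1, the set 𝒜^{k+1} ∩ 𝒵^{k+1} has exactly (k+2)·2^{k−1} elements. -/
noncomputable section
open scoped BigOperators Classical

/-!
A tuple in `Noninc (k + 1)` drops by `0` or `1` at each step, so it is determined by its last
value `c` and its set `s ⊆ Fin k` of descents. For such a tuple the bounds `-j ≤ α j ≤ k - j`
of `Adm` reduce to `0 ≤ α 0` and `α k ≤ 0`, i.e. to `-#s ≤ c ≤ 0`. Hence the count is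
`∑ s, (#s + 1) = k * 2 ^ (k - 1) + 2 ^ k`.
-/

open Finset

theorem Finset.sum_card_powerset {β : Type*} (x : Finset β) :
    ∑ t ∈ x.powerset, #t = #x * 2 ^ (#x - 1) := by
  rw [← Nat.sum_range_mul_choose, sum_powerset_apply_card (fun m => m)]
  simp only [smul_eq_mul, mul_comm]

theorem Finset.card_filter_le_eq_card_filter_lt_add {α : Type*} [LinearOrder α]
    (s : Finset α) (i : α) : #{j ∈ s | i ≤ j} = #{j ∈ s | i < j} + if i ∈ s then 1 else 0 := by
  have hsplit : {j ∈ s | i ≤ j} = {j ∈ s | i < j} ∪ {j ∈ s | i = j} := by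
    ext j
    simp only [mem_filter, mem_union, le_iff_lt_or_eq]
    tauto
  rw [hsplit, card_union_of_disjoint (disjoint_filter.2 fun j _ h h' => h.ne h'), filter_eq]
  split_ifs <;> simp

theorem mem_Noninc_iff {k : ℕ} {α : Fin (k + 1) → ℤ} :
    α ∈ Noninc (k + 1) ↔
      ∀ i : Fin k, α i.succ ≤ α i.castSucc ∧ α i.castSucc ≤ α i.succ + 1 :=
  ⟨fun h i => h i.castSucc (by simp), fun h i hi => h ⟨i, by omega⟩⟩

theorem mem_Adm_iff_of_mem_Noninc {k : ℕ} {α : Fin (k + 1) → ℤ} (hα : α ∈ Noninc (k + 1)) :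
    α ∈ Adm (k + 1) ↔ 0 ≤ α 0 ∧ α (Fin.last k) ≤ 0 := by
  rw [mem_Noninc_iff] at hα
  have hfirst : ∀ j : Fin (k + 1), α 0 ≤ α j + j := by
    intro j
    induction j using Fin.induction with
    | zero => simp
    | succ i ih =>
      have := (hα i).2
      simp only [Fin.val_castSucc, Fin.val_succ] at ih ⊢
      push_cast
      omega
  have hlast : ∀ j : Fin (k + 1), α j + j ≤ α (Fin.last k) + k := by
    intro j
    induction j using Fin.reverseInduction with
    | last => simp
    | cast i ih =>
      have := (hα i).2
      simp only [Fin.val_castSucc, Fin.val_succ] at ih ⊢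
      push_cast at ih
      omega
  constructor
  · rintro ⟨hbounds, -⟩
    have h0 := (hbounds 0).1
    have hk := (hbounds (Fin.last k)).2
    simp only [Fin.val_zero, Fin.val_last] at h0 hk
    push_cast at h0 hk
    omega
  · rintro ⟨h0, hk⟩
    refine ⟨fun j => ⟨?_, ?_⟩, fun i hi => (hα ⟨i, by omega⟩).2⟩
    · linarith [hfirst j]
    · have := hlast j
      push_cast
      omega

def ofDescents {k : ℕ} (s : Finset (Fin k)) (c : ℤ) : Fin (k + 1) → ℤ :=
  fun j => c + #{i ∈ s | j ≤ i.castSucc}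

section ofDescents

variable {k : ℕ} (s : Finset (Fin k)) (c : ℤ)

theorem ofDescents_zero : ofDescents s c 0 = c + #s := by
  simp [ofDescents]

theorem ofDescents_last : ofDescents s c (Fin.last k) = c := by
  simp [ofDescents]

theorem ofDescents_castSucc (i : Fin k) :
    ofDescents s c i.castSucc = ofDescents s c i.succ + if i ∈ s then 1 else 0 := by
  simp only [ofDescents, Fin.castSucc_le_castSucc_iff, Fin.succ_le_castSucc_iff,
    card_filter_le_eq_card_filter_lt_add]
  split_ifs <;> push_cast <;> ring

theorem mem_iff_ofDescents_castSucc (i : Fin k) :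
    i ∈ s ↔ ofDescents s c i.castSucc = ofDescents s c i.succ + 1 := by
  rw [ofDescents_castSucc]
  split_ifs with hi <;> simp [hi]

theorem ofDescents_mem_Noninc : ofDescents s c ∈ Noninc (k + 1) := by
  refine mem_Noninc_iff.2 fun i => ?_
  rw [ofDescents_castSucc]
  split_ifs <;> omega

end ofDescents

theorem ofDescents_inj {k : ℕ} {s t : Finset (Fin k)} {c d : ℤ} :
    ofDescents s c = ofDescents t d ↔ s = t ∧ c = d := by
  refine ⟨fun h => ⟨?_, ?_⟩, fun ⟨hs, hc⟩ => hs ▸ hc ▸ rfl⟩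
  · ext i
    rw [mem_iff_ofDescents_castSucc s c, mem_iff_ofDescents_castSucc t d, h]
  · simpa only [ofDescents_last] using congrFun h (Fin.last k)

theorem eq_ofDescents_of_mem_Noninc {k : ℕ} {α : Fin (k + 1) → ℤ} (hα : α ∈ Noninc (k + 1)) :
    α = ofDescents {i | α i.castSucc = α i.succ + 1} (α (Fin.last k)) := by
  rw [mem_Noninc_iff] at hα
  funext j
  induction j using Fin.reverseInduction with
  | last => rw [ofDescents_last]
  | cast i ih =>
    rw [ofDescents_castSucc, ← ih]
    have := hα i
    split_ifs with hi <;> simp only [mem_filter, mem_univ, true_and] at hi <;> omega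

theorem Adm_inter_Noninc_eq_image (k : ℕ) :
    Adm (k + 1) ∩ Noninc (k + 1) =
      ↑((univ.sigma fun s => Icc (-#s : ℤ) 0).image
        fun p : (_ : Finset (Fin k)) × ℤ => ofDescents p.1 p.2) := by
  ext α
  simp only [Set.mem_inter_iff, coe_image, Set.mem_image, coe_sigma, Set.mem_sigma_iff, coe_univ,
    Set.mem_univ, coe_Icc, Set.mem_Icc, true_and, Sigma.exists]
  constructor
  · rintro ⟨hA, hN⟩
    have hrepr := eq_ofDescents_of_mem_Noninc hN
    refine ⟨_, _, ?_, hrepr.symm⟩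
    rw [mem_Adm_iff_of_mem_Noninc hN, hrepr, ofDescents_zero, ofDescents_last] at hA
    omega
  · rintro ⟨s, c, hc, rfl⟩
    have hN := ofDescents_mem_Noninc s c
    refine ⟨(mem_Adm_iff_of_mem_Noninc hN).2 ?_, hN⟩
    rw [ofDescents_zero, ofDescents_last]
    omega

/-- `𝒜^{k+1} ∩ 𝒵^{k+1}` has `(k+2)·2^{k−1}` elements. -/
theorem stmt7 (k : ℕ) (hk : 1 ≤ k) :
    (Adm (k+1) ∩ Noninc (k+1)).ncard = (k + 2) * 2 ^ (k - 1) := by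
  have hinj : Function.Injective fun p : (_ : Finset (Fin k)) × ℤ => ofDescents p.1 p.2 :=
    fun p q h => by
      obtain ⟨hs, hc⟩ := ofDescents_inj.1 h
      exact Sigma.ext hs (heq_of_eq hc)
  rw [Adm_inter_Noninc_eq_image, Set.ncard_coe_finset, card_image_of_injective _ hinj, card_sigma]
  calc ∑ s : Finset (Fin k), #(Icc (-#s : ℤ) 0)
      = ∑ s ∈ (univ : Finset (Fin k)).powerset, (#s + 1) := by
        rw [powerset_univ]
        refine sum_congr rfl fun s _ => ?_
        rw [Int.card_Icc]
        omega
    _ = k * 2 ^ (k - 1) + 2 ^ k := by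
        rw [sum_add_distrib, sum_card_powerset, card_univ, Fintype.card_fin]
        simp
    _ = (k + 2) * 2 ^ (k - 1) := by
        obtain ⟨m, rfl⟩ := Nat.exists_eq_add_of_le' hk
        simp only [Nat.add_sub_cancel]
        ring
end
end

section
/- Let M ≥ 3 be an odd integer. Then the center of the periodic quantum Volterra algebra A_M^a equals the K-subalgebra generated by the single element C = u_M u_{M−1} ⋯ u_2 u_1. -/
noncomputable section
open scoped BigOperators Classical

/-- The free algebra on generators `u_n`, `n ∈ ℤ/M`. -/
abbrev FM (M : ℕ) : Type := FreeAlgebra K (ZMod M)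

noncomputable def vgen {M : ℕ} (n : ZMod M) : FM M := FreeAlgebra.ι K n

/-- Defining relations of the periodic quantum Volterra algebra `A_M^a`. -/
inductive RelAM (M : ℕ) : FM M → FM M → Prop
  | comm1 (n : ZMod M) : RelAM M (vgen n * vgen (n+1)) (ω • (vgen (n+1) * vgen n))
  | comm2 (n m : ZMod M) : n - m ≠ 1 → n - m ≠ -1 →
      RelAM M (vgen n * vgen m) (vgen m * vgen n)

/-- The periodic quantum Volterra algebra `A_M^a`. -/
abbrev AaM (M : ℕ) : Type := RingQuot (RelAM M)

noncomputable def πaM (M : ℕ) : FM M →ₐ[K] AaM M := RingQuot.mkAlgHom K (RelAM M)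

/-- The generator `u_n` of `A_M^a`. -/
noncomputable def w (M : ℕ) (n : ZMod M) : AaM M := πaM M (vgen n)

/-- The monomial `u_{α+k}` of `A_M^a`, subscripts read modulo `M`. -/
noncomputable def monoM (M : ℕ) {l : ℕ} (α : Fin l → ℤ) (k : ZMod M) : AaM M :=
  (List.ofFn (fun j => w M (((α j : ℤ) : ZMod M) + k))).prod

/-- The shifted polynomial `S^k(X_M^{(l)}) ∈ A_M^a`. -/
noncomputable def XM (M l : ℕ) (k : ZMod M) : AaM M := ∑ᶠ α ∈ Adm l, monoM M α k

/-- The periodic quantum Hamiltonian `H_{l+1} ∈ A_M^a`. -/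
noncomputable def HM (M l : ℕ) : AaM M :=
  ∑ᶠ α ∈ NSet l, ∑ k ∈ Finset.range M,
    (P α * (ω ^ (l+1) - 1) / (ω ^ (nu α 0) - 1)) • monoM M α (k : ZMod M)

/-- The element `C = u_M u_{M−1} ⋯ u_2 u_1` of `A_M^a`. -/
noncomputable def Cfull (M : ℕ) : AaM M :=
  (List.ofFn (fun j : Fin M => w M (((M - (j : ℕ) : ℕ) : ZMod M)))).prod

/-!
Any two generators `ω`-commute, so every word in the `u_n` is a power of `ω` times an ordered
monomial `u^a` (`a : ZMod M → ℕ`), and these span `A_M^a`. They are linearly independent: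
`A_M^a` acts on the space with basis `e_b` by `u_n e_b = ω^{b(n+1)} e_{b+δ_n}`, and `u^a` sends
`e_b` to `ω^{t(a) + ⟨a,b⟩} e_{a+b}` with `⟨a,b⟩ = ∑ₘ a(m) b(m+1)`.

Comparing the coefficients of `e_{a+δ_n}` in `u_n z e_0` and `z u_n e_0` shows that a central `z`
only involves exponents with `a(n+1) = a(n-1)`, i.e. `2`-periodic ones; for odd `M` they are
constant, and `u^{(m,…,m)}` is a multiple of `C^m`. Conversely `C` is a multiple of
`u^{(1,…,1)}`, which commutes with every `u^b` because `⟨1,b⟩ = ⟨b,1⟩`.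
-/

lemma omega_ne_zero : ω ≠ 0 := RatFunc.X_ne_zero

lemma omega_pow_injective : Function.Injective (ω ^ · : ℕ → K) := by
  intro i j h
  have hX : (Polynomial.X : Polynomial ℂ) ^ i = Polynomial.X ^ j := by
    apply IsFractionRing.injective (Polynomial ℂ) K
    simpa [ω, RatFunc.algebraMap_X] using h
  simpa using congrArg Polynomial.natDegree hX

lemma ZMod.two_ne_zero_of_three_le {M : ℕ} (hM : 3 ≤ M) : (2 : ZMod M) ≠ 0 := by
  intro h
  have := Nat.le_of_dvd two_pos ((ZMod.natCast_eq_zero_iff 2 M).mp (by exact_mod_cast h))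
  omega

lemma Function.Periodic.eq_apply_zero_of_odd {M : ℕ} [NeZero M] {β : Type*} {f : ZMod M → β}
    (hf : Function.Periodic f 2) (hodd : Odd M) (x : ZMod M) : f x = f 0 := by
  have h2 : (2 : ZMod M) * 2⁻¹ = 1 := by
    exact_mod_cast ZMod.coe_mul_inv_eq_one 2 (Nat.coprime_two_left.mpr hodd)
  calc f x = f (((2⁻¹ * x).val : ℕ) * 2) := by
        rw [ZMod.natCast_zmod_val, mul_comm, ← mul_assoc, h2, one_mul]
    _ = f 0 := hf.nat_mul_eq _

namespace Volterra

variable {M : ℕ}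

lemma w_mul_w_add_one (n : ZMod M) : w M n * w M (n + 1) = ω • (w M (n + 1) * w M n) := by
  simpa [w, πaM] using RingQuot.mkAlgHom_rel K (RelAM.comm1 (M := M) n)

lemma w_mul_w_of_ne {n m : ZMod M} (h₁ : n - m ≠ 1) (h₂ : n - m ≠ -1) :
    w M n * w M m = w M m * w M n := by
  simpa [w, πaM] using RingQuot.mkAlgHom_rel K (RelAM.comm2 (M := M) n m h₁ h₂)

lemma exists_w_mul_w (n m : ZMod M) : ∃ k : ℤ, w M n * w M m = ω ^ k • (w M m * w M n) := by
  by_cases h₁ : m = n + 1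
  · exact ⟨1, by simpa [h₁] using w_mul_w_add_one n⟩
  by_cases h₂ : n = m + 1
  · refine ⟨-1, ?_⟩
    rw [h₂, w_mul_w_add_one, smul_smul, zpow_neg_one, inv_mul_cancel₀ omega_ne_zero, one_smul]
  · refine ⟨0, ?_⟩
    rw [zpow_zero, one_smul]
    exact w_mul_w_of_ne (fun h => h₂ (by linear_combination h))
      (fun h => h₁ (by linear_combination -h))

def word (l : List (ZMod M)) : AaM M := (l.map (w M)).prod

@[simp] lemma word_nil : word ([] : List (ZMod M)) = 1 := rfl

@[simp] lemma word_cons (n : ZMod M) (l : List (ZMod M)) : word (n :: l) = w M n * word l :=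
  List.prod_cons

lemma word_pow (l : List (ZMod M)) (m : ℕ) : word l ^ m = word (List.replicate m l).flatten := by
  simp [word, List.map_flatten, List.prod_flatten, List.map_replicate, List.prod_replicate]

lemma exists_w_mul_word (n : ZMod M) (l : List (ZMod M)) :
    ∃ k : ℤ, w M n * word l = ω ^ k • (word l * w M n) := by
  induction l with
  | nil => exact ⟨0, by simp⟩
  | cons m l ih =>
    obtain ⟨k, hk⟩ := ih
    obtain ⟨j, hj⟩ := exists_w_mul_w n m
    refine ⟨j + k, ?_⟩
    rw [word_cons, ← mul_assoc, hj, smul_mul_assoc, mul_assoc, hk, mul_smul_comm, smul_smul,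
      ← zpow_add₀ omega_ne_zero, ← mul_assoc]

def multideg (l : List (ZMod M)) : ZMod M → ℕ := fun i => l.count i

@[simp] lemma multideg_nil : multideg ([] : List (ZMod M)) = 0 := rfl

lemma multideg_cons (n : ZMod M) (l : List (ZMod M)) :
    multideg (n :: l) = multideg l + Pi.single n 1 := by
  funext i
  by_cases h : i = n
  · subst h; simp [multideg]
  · simp [multideg, h, Ne.symm h]

section OrderedMonomials

variable [NeZero M]

def orderedWord (a : ZMod M → ℕ) : List (ZMod M) :=
  (Finset.univ : Finset (ZMod M)).toList.flatMap fun m => List.replicate (a m) m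

@[simp] lemma multideg_orderedWord (a : ZMod M → ℕ) : multideg (orderedWord a) = a := by
  funext i
  simp [multideg, orderedWord, List.count_flatMap, List.count_replicate, Function.comp_def]

def ordMon (a : ZMod M → ℕ) : AaM M := word (orderedWord a)

@[simp] lemma ordMon_zero : ordMon (0 : ZMod M → ℕ) = 1 :=
  congrArg word (List.flatMap_eq_nil_iff.mpr fun _ _ => rfl)

lemma exists_w_mul_ordMon (n : ZMod M) (a : ZMod M → ℕ) :
    ∃ k : ℤ, w M n * ordMon a = ω ^ k • ordMon (a + Pi.single n 1) := by
  obtain ⟨P, Q, hPQ⟩ := List.append_of_mem (Finset.mem_toList.mpr (Finset.mem_univ n))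
  have hnodup := hPQ ▸ Finset.nodup_toList (Finset.univ : Finset (ZMod M))
  rw [List.nodup_append, List.nodup_cons] at hnodup
  have hnP : n ∉ P := fun h => hnodup.2.2 n h n List.mem_cons_self rfl
  have hnQ : n ∉ Q := hnodup.2.1.1
  have hsplit : ∀ b : ZMod M → ℕ,
      ordMon b = word (P.flatMap fun m => List.replicate (b m) m) *
        (w M n ^ b n * word (Q.flatMap fun m => List.replicate (b m) m)) := by
    intro b
    simp [ordMon, orderedWord, hPQ, word]
  have hoff : ∀ (R : List (ZMod M)), n ∉ R → R.flatMap (fun m => List.replicate (a m) m) =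
      R.flatMap (fun m => List.replicate ((a + Pi.single n 1 : ZMod M → ℕ) m) m) := fun R hR =>
    List.flatMap_congr fun m hm => by
      rw [Pi.add_apply, Pi.single_eq_of_ne (ne_of_mem_of_not_mem hm hR), add_zero]
  obtain ⟨k, hk⟩ := exists_w_mul_word n (P.flatMap fun m => List.replicate (a m) m)
  refine ⟨k, ?_⟩
  rw [hsplit, hsplit, ← mul_assoc, hk, smul_mul_assoc, mul_assoc, ← mul_assoc (w M n),
    ← pow_succ', ← hoff P hnP, ← hoff Q hnQ]
  simp

lemma exists_word_eq_smul_ordMon (l : List (ZMod M)) :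
    ∃ k : ℤ, word l = ω ^ k • ordMon (multideg l) := by
  induction l with
  | nil => exact ⟨0, by simp⟩
  | cons n l ih =>
    obtain ⟨k, hk⟩ := ih
    obtain ⟨j, hj⟩ := exists_w_mul_ordMon n (multideg l)
    refine ⟨k + j, ?_⟩
    rw [word_cons, hk, mul_smul_comm, hj, smul_smul, ← zpow_add₀ omega_ne_zero, multideg_cons]

end OrderedMonomials

def succPairs : List (ZMod M) → ℕ
  | [] => 0
  | n :: l => succPairs l + l.count (n + 1)

section Pairing

variable [NeZero M]

def pairing (a b : ZMod M → ℕ) : ℕ := ∑ m, a m * b (m + 1)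

lemma pairing_add_single_left (a b : ZMod M → ℕ) (n : ZMod M) :
    pairing (a + Pi.single n 1) b = pairing a b + b (n + 1) := by
  simp [pairing, add_mul, Finset.sum_add_distrib, Pi.single_apply]

lemma pairing_single_right (a : ZMod M → ℕ) (n : ZMod M) :
    pairing a (Pi.single n 1) = a (n - 1) := by
  simp [pairing, Pi.single_apply, ← eq_sub_iff_add_eq]

@[simp] lemma pairing_zero_right (a : ZMod M → ℕ) : pairing a 0 = 0 := by
  simp [pairing]

lemma pairing_one_left (a : ZMod M → ℕ) : pairing 1 a = pairing a 1 := by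
  simpa [pairing] using Equiv.sum_comp (Equiv.addRight (1 : ZMod M)) a

end Pairing

section Representation

open Finsupp

abbrev V (M : ℕ) : Type := (ZMod M → ℕ) →₀ K

def genOp (n : ZMod M) : Module.End K (V M) :=
  lsum K fun a => ω ^ a (n + 1) • lsingle (a + Pi.single n 1)

lemma genOp_single (n : ZMod M) (a : ZMod M → ℕ) (r : K) :
    genOp n (single a r) = ω ^ a (n + 1) • single (a + Pi.single n 1) r := by
  rw [genOp, lsum_single, LinearMap.smul_apply, lsingle_apply]

lemma genOp_apply_add_single (n : ZMod M) (v : V M) (a : ZMod M → ℕ) :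
    genOp n v (a + Pi.single n 1) = ω ^ a (n + 1) * v a := by
  induction v using Finsupp.induction_linear with
  | zero => simp
  | add v₁ v₂ h₁ h₂ => simp [h₁, h₂, mul_add]
  | single a' r =>
    rw [genOp_single, Finsupp.smul_apply, single_apply_left (add_left_injective _), smul_eq_mul]
    by_cases h : a' = a
    · rw [h]
    · simp [h]

def freeRep (M : ℕ) : FM M →ₐ[K] Module.End K (V M) := FreeAlgebra.lift K genOp

lemma freeRep_vgen (n : ZMod M) : freeRep M (vgen n) = genOp n :=
  FreeAlgebra.lift_ι_apply _ _

lemma freeRep_respects_rel (h2 : (2 : ZMod M) ≠ 0) ⦃x y : FM M⦄ (h : RelAM M x y) :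
    freeRep M x = freeRep M y := by
  cases h with
  | comm1 n =>
    have hn : n + 1 + 1 ≠ n := fun h => h2 (by linear_combination h)
    ext a : 2
    simp only [map_mul, map_smul, freeRep_vgen, Module.End.mul_apply, LinearMap.smul_apply,
      LinearMap.comp_apply, lsingle_apply, genOp_single, map_smul, smul_smul]
    rw [add_right_comm a, Pi.add_apply, Pi.add_apply, Pi.single_eq_same, Pi.single_eq_of_ne hn,
      add_zero, pow_succ]
    congr 1
    ring
  | comm2 n m h₁ h₂ =>
    have hm : m + 1 ≠ n := fun h => h₁ (by linear_combination -h)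
    have hn : n + 1 ≠ m := fun h => h₂ (by linear_combination h)
    ext a : 2
    simp only [map_mul, freeRep_vgen, Module.End.mul_apply, LinearMap.comp_apply, lsingle_apply,
      genOp_single, map_smul, smul_smul]
    rw [add_right_comm a]
    simp [hn, hm, mul_comm]

def rep (h2 : (2 : ZMod M) ≠ 0) : AaM M →ₐ[K] Module.End K (V M) :=
  RingQuot.liftAlgHom K ⟨freeRep M, freeRep_respects_rel h2⟩

lemma rep_w (h2 : (2 : ZMod M) ≠ 0) (n : ZMod M) : rep h2 (w M n) = genOp n := by
  rw [rep, w, πaM, RingQuot.liftAlgHom_mkAlgHom_apply, freeRep_vgen]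


end Representation


section Representation

open Finsupp

variable [NeZero M] (h2 : (2 : ZMod M) ≠ 0)

lemma rep_word (l : List (ZMod M)) (b : ZMod M → ℕ) (r : K) :
    rep h2 (word l) (single b r) =
      ω ^ (succPairs l + pairing (multideg l) b) • single (multideg l + b) r := by
  induction l with
  | nil => simp [succPairs, pairing]
  | cons n l ih =>
    rw [word_cons, map_mul, Module.End.mul_apply, ih, map_smul, rep_w, genOp_single, smul_smul,
      ← pow_add, multideg_cons, pairing_add_single_left, add_right_comm _ _ b]
    congr 2
    simp only [succPairs, Pi.add_apply, multideg]
    ring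

lemma rep_ordMon (a b : ZMod M → ℕ) (r : K) :
    rep h2 (ordMon a) (single b r) =
      ω ^ (succPairs (orderedWord a) + pairing a b) • single (a + b) r := by
  rw [ordMon, rep_word, multideg_orderedWord]

end Representation

section Basis

open Finsupp

lemma adjoin_range_w : Algebra.adjoin K (Set.range (w M)) = ⊤ := by
  have : Set.range (w M) = πaM M '' Set.range (FreeAlgebra.ι K) := by
    rw [← Set.range_comp]; rfl
  rw [this, ← AlgHom.map_adjoin, FreeAlgebra.adjoin_range_ι, Algebra.map_top,
    AlgHom.range_eq_top]
  exact RingQuot.mkAlgHom_surjective K _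

variable [NeZero M]

lemma span_range_ordMon : Submodule.span K (Set.range (ordMon (M := M))) = ⊤ := by
  rw [eq_top_iff, ← Algebra.top_toSubmodule, ← adjoin_range_w, Algebra.adjoin_eq_span,
    ← FreeMonoid.mrange_lift, Submodule.span_le]
  rintro _ ⟨l, rfl⟩
  obtain ⟨k, hk⟩ := exists_word_eq_smul_ordMon l.toList
  rw [SetLike.mem_coe, FreeMonoid.lift_apply, ← word, hk]
  exact Submodule.smul_mem _ _ (Submodule.subset_span ⟨_, rfl⟩)

lemma linearIndependent_ordMon (h2 : (2 : ZMod M) ≠ 0) :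
    LinearIndependent K (ordMon (M := M)) := by
  refine .of_comp (LinearMap.applyₗ (single 0 1) ∘ₗ (rep h2).toLinearMap) ?_
  convert (linearIndependent_single_one K (ZMod M → ℕ)).units_smul
    fun a => Units.mk0 _ (pow_ne_zero (succPairs (orderedWord a)) omega_ne_zero) using 1
  funext a
  simp [rep_ordMon, smul_single, Units.smul_def]

def ordMonBasis (h2 : (2 : ZMod M) ≠ 0) : Module.Basis (ZMod M → ℕ) K (AaM M) :=
  .mk (linearIndependent_ordMon h2) span_range_ordMon.ge

@[simp] lemma ordMonBasis_apply (h2 : (2 : ZMod M) ≠ 0) (a : ZMod M → ℕ) :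
    ordMonBasis h2 a = ordMon a :=
  Module.Basis.mk_apply _ _ a

lemma rep_apply_single_apply_add (h2 : (2 : ZMod M) ≠ 0) (z : AaM M) (a b : ZMod M → ℕ) :
    rep h2 z (single b 1) (a + b) =
      (ordMonBasis h2).repr z a * ω ^ (succPairs (orderedWord a) + pairing a b) := by
  have key := (ordMonBasis h2).ext
      (f₁ := lapply (a + b) ∘ₗ LinearMap.applyₗ (single b 1) ∘ₗ (rep h2).toLinearMap)
      (f₂ := ω ^ (succPairs (orderedWord a) + pairing a b) •
        lapply a ∘ₗ (ordMonBasis h2).repr.toLinearMap) fun a' => by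
    simp only [LinearMap.comp_apply, LinearMap.smul_apply, LinearEquiv.coe_coe,
      Module.Basis.repr_self]
    rw [ordMonBasis_apply]
    by_cases h : a' = a
    · subst h; simp [rep_ordMon]
    · simp [rep_ordMon, h]
  simpa [mul_comm] using LinearMap.congr_fun key z

lemma rep_apply_single_zero_injective (h2 : (2 : ZMod M) ≠ 0) :
    Function.Injective fun z : AaM M => rep h2 z (single 0 1) := by
  intro x y h
  refine (ordMonBasis h2).repr.injective (Finsupp.ext fun a => ?_)
  have := congrArg (· (a + 0)) h
  simp only [rep_apply_single_apply_add] at this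
  exact mul_right_cancel₀ (pow_ne_zero _ omega_ne_zero) this

end Basis

def cfullWord (M : ℕ) : List (ZMod M) := List.ofFn fun j : Fin M => ((M - j : ℕ) : ZMod M)

lemma cfull_eq_word : Cfull M = word (cfullWord M) := by
  rw [Cfull, word, cfullWord, List.map_ofFn]
  rfl

section Center

open Finsupp

variable [NeZero M]

lemma commute_ordMon (h2 : (2 : ZMod M) ≠ 0) {a b : ZMod M → ℕ}
    (h : pairing a b = pairing b a) :
    Commute (ordMon a) (ordMon b) := by
  apply rep_apply_single_zero_injective h2
  simp only [map_mul, Module.End.mul_apply, rep_ordMon, map_smul, smul_smul, add_zero,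
    pairing_zero_right, h, add_comm a b]
  congr 1
  ring

lemma multideg_cfullWord : multideg (cfullWord M) = 1 := by
  have hinj : Function.Injective fun j : Fin M => ((M - j : ℕ) : ZMod M) := by
    intro i j h
    simp only at h
    rw [Nat.cast_sub i.2.le, Nat.cast_sub j.2.le, ZMod.natCast_self, zero_sub, zero_sub,
      neg_inj] at h
    simpa [Fin.ext_iff, ZMod.val_cast_of_lt i.2, ZMod.val_cast_of_lt j.2] using
      congrArg ZMod.val h
  have hsurj := ((Fintype.bijective_iff_injective_and_card _).mpr ⟨hinj, by simp⟩).2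
  funext i
  obtain ⟨j, rfl⟩ := hsurj i
  exact List.count_eq_one_of_mem (List.nodup_ofFn.mpr hinj) (List.mem_ofFn' _ _ |>.mpr ⟨j, rfl⟩)

lemma exists_ordMon_const_eq_smul_cfull_pow (m : ℕ) :
    ∃ k : ℤ, ordMon (fun _ : ZMod M => m) = ω ^ k • Cfull M ^ m := by
  obtain ⟨k, hk⟩ := exists_word_eq_smul_ordMon (List.replicate m (cfullWord M)).flatten
  have hdeg : multideg (List.replicate m (cfullWord M)).flatten = fun _ => m := by
    funext i
    have := congrFun (multideg_cfullWord (M := M)) i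
    simp_all [multideg, List.count_flatten, List.map_replicate]
  refine ⟨-k, ?_⟩
  rw [cfull_eq_word, word_pow, hk, hdeg, smul_smul, ← zpow_add₀ omega_ne_zero, neg_add_cancel,
    zpow_zero, one_smul]

lemma cfull_mem_center (h2 : (2 : ZMod M) ≠ 0) : Cfull M ∈ Subalgebra.center K (AaM M) := by
  obtain ⟨k, hk⟩ := exists_word_eq_smul_ordMon (cfullWord M)
  rw [cfull_eq_word, hk, multideg_cfullWord]
  refine Subalgebra.smul_mem _ (Subalgebra.mem_center_iff.mpr fun z => ?_) _
  have : LinearMap.mulRight K (ordMon 1) = LinearMap.mulLeft K (ordMon (1 : ZMod M → ℕ)) :=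
    (ordMonBasis h2).ext fun a => by
      simpa using (commute_ordMon h2 (pairing_one_left a).symm).eq
  exact LinearMap.congr_fun this z

lemma periodic_of_mem_center (h2 : (2 : ZMod M) ≠ 0) {z : AaM M}
    (hz : z ∈ Subalgebra.center K (AaM M)) {a : ZMod M → ℕ}
    (ha : (ordMonBasis h2).repr z a ≠ 0) :
    Function.Periodic a 2 := by
  suffices h : ∀ n, a (n - 1) = a (n + 1) from fun x => by
    simpa [add_assoc, one_add_one_eq_two] using (h (x + 1)).symm
  intro n
  have hcomm := congrArg (fun x => rep h2 x (single 0 1) (a + Pi.single n 1))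
    (Subalgebra.mem_center_iff.mp hz (w M n))
  have hz0 := rep_apply_single_apply_add h2 z a 0
  rw [add_zero] at hz0
  simp only [map_mul, Module.End.mul_apply, rep_w, genOp_single, genOp_apply_add_single, hz0,
    Pi.zero_apply, pow_zero, one_smul, zero_add] at hcomm
  rw [rep_apply_single_apply_add, pairing_single_right, pairing_zero_right, add_zero,
    pow_add] at hcomm
  have hpow : ω ^ a (n - 1) = ω ^ a (n + 1) :=
    mul_left_cancel₀ (mul_ne_zero ha (pow_ne_zero (succPairs (orderedWord a)) omega_ne_zero))
      (by linear_combination -hcomm)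
  exact omega_pow_injective hpow

end Center

end Volterra

/-- for odd `M ≥ 3`, the center of `A_M^a` is generated
by `C = u_M u_{M−1} ⋯ u_1`. -/
theorem stmt14 (M : ℕ) (hM : 3 ≤ M) (hodd : Odd M) :
    Subalgebra.center K (AaM M) = Algebra.adjoin K {Cfull M} := by
  open Volterra in
  have : NeZero M := ⟨by omega⟩
  have h2 := ZMod.two_ne_zero_of_three_le hM
  refine le_antisymm (fun z hz => ?_)
    (Algebra.adjoin_le (Set.singleton_subset_iff.mpr (cfull_mem_center h2)))
  rw [← (ordMonBasis h2).linearCombination_repr z, Finsupp.linearCombination_apply]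
  refine Subalgebra.sum_mem _ fun a ha => Subalgebra.smul_mem _ ?_ _
  have hconst : a = fun _ => a 0 := funext <|
    (periodic_of_mem_center h2 hz (Finsupp.mem_support_iff.mp ha)).eq_apply_zero_of_odd hodd
  obtain ⟨k, hk⟩ := exists_ordMon_const_eq_smul_cfull_pow (M := M) (a 0)
  rw [ordMonBasis_apply, hconst, hk]
  exact Subalgebra.smul_mem _ (pow_mem (Algebra.self_mem_adjoin_singleton K _) _) _
end
end

section
/- Let M = 2N with N ≥ 2 even, and in A_M^b set B_1 = u_{M−1} u_{M−3} ⋯ u_3 u_1 and B_2 = u_M u_{M−2} ⋯ u_4 u_2. Then: (i) B_1 u_k + u_k B_1 = 0 and B_2 u_k + u_k B_2 = 0 for every k ∈ ℤ/M; (ii) B_1 B_2 = B_2 B_1; (iii) with Ĉ_1 = u_{M−1}^2 u_{M−3}^2 ⋯ u_1^2, Ĉ_2 = u_M^2 u_{M−2}^2 ⋯ u_2^2 and Ĉ = u_M u_{M−1} ⋯ u_2 u_1, one has Ĉ_1 = (−1)^{N(N−1)/2} B_1^2, Ĉ_2 = (−1)^{N(N−1)/2} B_2^2, and Ĉ = (−1)^{(N−1)(N−2)/2}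 ω^{1−N} B_2 B_1. -/
noncomputable section
open scoped BigOperators Classical

/-- Defining relations of the periodic non-deformation quantum algebra `A_M^b`. -/
inductive RelBM (M : ℕ) : FM M → FM M → Prop
  | comm1 (n : ZMod M) :
      RelBM M (vgen n * vgen (n+1))
        ((((-1 : K) ^ n.val) * ω) • (vgen (n+1) * vgen n))
  | acomm (n m : ZMod M) : n ≠ m → n - m ≠ 1 → n - m ≠ -1 →
      RelBM M (vgen n * vgen m) (-(vgen m * vgen n))

/-- The periodic non-deformation quantum algebra `A_M^b`. -/
abbrev AbM (M : ℕ) : Type := RingQuot (RelBM M)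

noncomputable def πbM (M : ℕ) : FM M →ₐ[K] AbM M := RingQuot.mkAlgHom K (RelBM M)

/-- The generator `u_n` of `A_M^b`. -/
noncomputable def wb (M : ℕ) (n : ZMod M) : AbM M := πbM M (vgen n)

/-- The element `B_1 = u_{M−1} u_{M−3} ⋯ u_3 u_1` of `A_M^b`. -/
noncomputable def B1 (M : ℕ) : AbM M :=
  (List.ofFn (fun j : Fin (M/2) => wb M (((M - 1 - 2*(j : ℕ) : ℕ) : ZMod M)))).prod

/-- The element `B_2 = u_M u_{M−2} ⋯ u_4 u_2` of `A_M^b`. -/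
noncomputable def B2 (M : ℕ) : AbM M :=
  (List.ofFn (fun j : Fin (M/2) => wb M (((M - 2*(j : ℕ) : ℕ) : ZMod M)))).prod

/-- The element `Ĉ_1 = u_{M−1}² u_{M−3}² ⋯ u_3² u_1²` of `A_M^b`. -/
noncomputable def Chat1 (M : ℕ) : AbM M :=
  (List.ofFn (fun j : Fin (M/2) => (wb M (((M - 1 - 2*(j : ℕ) : ℕ) : ZMod M)))^2)).prod

/-- The element `Ĉ_2 = u_M² u_{M−2}² ⋯ u_4² u_2²` of `A_M^b`. -/
noncomputable def Chat2 (M : ℕ) : AbM M :=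
  (List.ofFn (fun j : Fin (M/2) => (wb M (((M - 2*(j : ℕ) : ℕ) : ZMod M)))^2)).prod

/-- The element `Ĉ = u_M u_{M−1} ⋯ u_2 u_1` of `A_M^b`. -/
noncomputable def ChatB (M : ℕ) : AbM M :=
  (List.ofFn (fun j : Fin M => wb M (((M - (j : ℕ) : ℕ) : ZMod M)))).prod

/-!
Any two generators quasi-commute, `u_n u_m = c(n,m) u_m u_n`, with `c(n,m) = -1` unless `n` and
`m` are equal or adjacent. Moving `u_k` through `B_1` (or `B_2`) costs the product of `c(j,k)` over
all `j` of one parity. If `k` has that parity this is `(-1)^(N-1)`; otherwise the neighbours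
`k ± 1` contribute `c(k+1,k) c(k-1,k) = -1`, because the sign `(-1)^n` in the relations flips
between neighbours, and the other factors `(-1)^(N-2)`. Both are `-1` as `N` is even.
The other claims follow by reordering products: the factors of `B_1` (or `B_2`) pairwise
anticommute, and sorting `Ĉ` into `B_2 B_1` moves each `u_{M-2j}` past `u_{M-1}, …, u_{M-2j+1}`,
at the cost of `-1` for each factor except the neighbour `u_{M-2j+1}`, which gives `ω⁻¹`.
-/

section QuasiCommuting

variable {R A : Type*} [CommRing R] [Ring A] [Algebra R A]

theorem List.prod_map_mul_eq_smul {ι : Type*} (x : ι → A) (c : ι → R) (y : A) :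
    ∀ L : List ι, (∀ a ∈ L, x a * y = c a • (y * x a)) →
      (L.map x).prod * y = (L.map c).prod • (y * (L.map x).prod)
  | [], _ => by simp
  | a :: L, h => by
    have ih := List.prod_map_mul_eq_smul x c y L fun b hb => h b (List.mem_cons_of_mem a hb)
    rw [List.map_cons, List.map_cons, List.prod_cons, List.prod_cons, mul_assoc,
      ih, mul_smul_comm, ← mul_assoc, h a List.mem_cons_self, smul_mul_assoc, smul_smul,
      mul_comm (c a), mul_assoc]

theorem List.prod_map_mul_eq_neg_one_pow_smul {ι : Type*} (x : ι → A) (y : A) (L : List ι)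
    (h : ∀ a ∈ L, x a * y = -(y * x a)) :
    (L.map x).prod * y = (-1 : R) ^ L.length • (y * (L.map x).prod) := by
  rw [List.prod_map_mul_eq_smul x (fun _ => (-1 : R)) y L
    fun a ha => by rw [h a ha, neg_one_smul], List.map_const', List.prod_replicate]

theorem List.prod_map_mul_self_eq_smul {ι : Type*} (x : ι → A) :
    ∀ L : List ι, L.Pairwise (fun a b => x b * x a = -(x a * x b)) →
      (L.map x).prod * (L.map x).prod = (-1 : R) ^ L.length.choose 2 • (L.map (x · ^ 2)).prod
  | [], _ => by simp
  | a :: L, h => by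
    rw [List.pairwise_cons] at h
    set P := (L.map x).prod
    have ih : P * P = (-1 : R) ^ L.length.choose 2 • (L.map (x · ^ 2)).prod :=
      List.prod_map_mul_self_eq_smul x L h.2
    have hmove : P * x a = (-1 : R) ^ L.length • (x a * P) :=
      List.prod_map_mul_eq_neg_one_pow_smul x (x a) L h.1
    simp only [List.map_cons, List.prod_cons, List.length_cons, Nat.choose_succ_succ',
      Nat.choose_one_right]
    calc x a * P * (x a * P) = x a * (P * x a) * P := by simp only [mul_assoc]
      _ = (-1 : R) ^ (L.length + L.length.choose 2) • (x a ^ 2 * (L.map (x · ^ 2)).prod) := by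
        rw [hmove, mul_smul_comm, smul_mul_assoc, mul_assoc, mul_assoc, ih, mul_smul_comm,
          mul_smul_comm, smul_smul, ← pow_add, ← mul_assoc, sq]

theorem List.prod_range_mul_eq_smul (x y : ℕ → A) (c : ℕ → ℕ → R) (n : ℕ)
    (h : ∀ j < n, ∀ i < j, y i * x j = c i j • (x j * y i)) :
    ((List.range n).map fun i => x i * y i).prod =
      (∏ j ∈ Finset.range n, ∏ i ∈ Finset.range j, c i j) •
        (((List.range n).map x).prod * ((List.range n).map y).prod) := by
  induction n with
  | zero => simp
  | succ n ih =>
    have hmove := List.prod_map_mul_eq_smul y (c · n) (x n) (List.range n)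
      fun i hi => h n (Nat.lt_add_one n) i (List.mem_range.1 hi)
    rw [← List.prod_toFinset _ List.nodup_range, List.toFinset_range] at hmove
    rw [List.prod_range_succ, List.prod_range_succ, List.prod_range_succ, Finset.prod_range_succ,
      ih fun j hj => h j (by omega), smul_mul_assoc, mul_assoc, ← mul_assoc _ (x n),
      hmove, smul_mul_assoc, mul_smul_comm, smul_smul, mul_assoc, mul_assoc]

end QuasiCommuting

theorem List.prod_map_range_two_mul {M : Type*} [Monoid M] (f : ℕ → M) (n : ℕ) :
    ((List.range (2 * n)).map f).prod =
      ((List.range n).map fun i => f (2 * i) * f (2 * i + 1)).prod := by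
  induction n with
  | zero => simp
  | succ n ih =>
    rw [show 2 * (n + 1) = 2 * n + 1 + 1 by ring, List.prod_range_succ, List.prod_range_succ, ih,
      List.prod_range_succ, mul_assoc]

theorem List.ofFn_eq_map_range {α : Type*} {m n : ℕ} (h : m = n) (g : ℕ → α) :
    List.ofFn (fun i : Fin m => g i) = (List.range n).map g := by
  subst h
  rw [List.ofFn_eq_map, ← List.map_coe_finRange_eq_range, List.map_map]
  rfl

theorem Finset.prod_eq_mul_pow_of_forall_ne {ι M : Type*} [DecidableEq ι] [CommMonoid M]
    {s : Finset ι} {f : ι → M} {a : ι} {c : M} (ha : a ∈ s) (h : ∀ j ∈ s, j ≠ a → f j = c) :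
    ∏ j ∈ s, f j = f a * c ^ (s.card - 1) := by
  rw [← Finset.mul_prod_erase s f ha, Finset.prod_congr rfl fun j hj =>
      h j (Finset.mem_of_mem_erase hj) (Finset.ne_of_mem_erase hj),
    Finset.prod_const, Finset.card_erase_of_mem ha]

section NatCast

variable {M : ℕ}

lemma ZMod.natCast_ne_zero_of_lt {a : ℕ} (h₀ : 0 < a) (h : a < M) : (a : ZMod M) ≠ 0 := by
  rw [Ne, ZMod.natCast_eq_zero_iff]
  exact fun hd => absurd (Nat.le_of_dvd h₀ hd) (by omega)

lemma ZMod.natCast_self_sub {a : ℕ} (h : a ≤ M) : ((M - a : ℕ) : ZMod M) = -(a : ZMod M) := by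
  rw [Nat.cast_sub h, ZMod.natCast_self, zero_sub]

lemma ZMod.eq_of_natCast_eq {a b : ℕ} (ha : a < M) (hb : b < M) (h : (a : ZMod M) = b) :
    a = b := by
  rwa [ZMod.natCast_eq_natCast_iff', Nat.mod_eq_of_lt ha, Nat.mod_eq_of_lt hb] at h

end NatCast

section Generators

variable (M : ℕ)

lemma wb_mul_wb_add_one (n : ZMod M) :
    wb M n * wb M (n + 1) = ((-1 : K) ^ n.val * ω) • (wb M (n + 1) * wb M n) := by
  simpa only [wb, πbM, map_mul, map_smul] using RingQuot.mkAlgHom_rel K (RelBM.comm1 (M := M) n)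

lemma wb_mul_wb_eq_neg {n m : ZMod M} (h₀ : n ≠ m) (h₁ : n - m ≠ 1) (h₂ : n - m ≠ -1) :
    wb M n * wb M m = -(wb M m * wb M n) := by
  simpa only [wb, πbM, map_mul, map_neg] using
    RingQuot.mkAlgHom_rel K (RelBM.acomm (M := M) n m h₀ h₁ h₂)

def commCoeff (n m : ZMod M) : K :=
  if n = m then 1
  else if m = n + 1 then (-1) ^ n.val * ω
  else if n = m + 1 then ((-1) ^ m.val * ω)⁻¹
  else -1

lemma wb_mul_wb (n m : ZMod M) : wb M n * wb M m = commCoeff M n m • (wb M m * wb M n) := by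
  unfold commCoeff
  split_ifs with h₀ h₁ h₂
  · rw [h₀, one_smul]
  · rw [h₁, wb_mul_wb_add_one]
  · have hω : (-1 : K) ^ m.val * ω ≠ 0 := mul_ne_zero (by simp) RatFunc.X_ne_zero
    rw [h₂, wb_mul_wb_add_one, smul_smul, inv_mul_cancel₀ hω, one_smul]
  · rw [wb_mul_wb_eq_neg M h₀ (fun h => h₂ (by linear_combination h))
      (fun h => h₁ (by linear_combination -h))]
    exact (neg_one_smul K _).symm

variable {M}

lemma commCoeff_self (k : ZMod M) : commCoeff M k k = 1 := if_pos rfl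

lemma commCoeff_of_not_adjacent {n m : ZMod M} (h₀ : n ≠ m) (h₁ : m ≠ n + 1) (h₂ : n ≠ m + 1) :
    commCoeff M n m = -1 := by
  rw [commCoeff, if_neg h₀, if_neg h₁, if_neg h₂]

lemma commCoeff_add_one_self (hM : 3 ≤ M) (k : ZMod M) :
    commCoeff M (k + 1) k = ((-1) ^ k.val * ω)⁻¹ := by
  have h₁ : (1 : ZMod M) ≠ 0 := by exact_mod_cast ZMod.natCast_ne_zero_of_lt one_pos (by omega)
  have h₂ : (2 : ZMod M) ≠ 0 := by exact_mod_cast ZMod.natCast_ne_zero_of_lt two_pos (by omega)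
  rw [commCoeff, if_neg fun h => h₁ (by linear_combination h),
    if_neg fun h => h₂ (by linear_combination -h), if_pos rfl]

lemma commCoeff_sub_one_self (hM : 2 ≤ M) (k : ZMod M) :
    commCoeff M (k - 1) k = (-1) ^ (k - 1).val * ω := by
  have h₁ : (1 : ZMod M) ≠ 0 := by exact_mod_cast ZMod.natCast_ne_zero_of_lt one_pos (by omega)
  rw [commCoeff, if_neg fun h => h₁ (by linear_combination -h), if_pos (by ring)]

end Generators

section Parity

variable {N : ℕ}

def parity (N : ℕ) : ZMod (2 * N) →+* ZMod 2 := ZMod.castHom (dvd_mul_right 2 N) (ZMod 2)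

lemma parity_ne_of_add_one {n m : ZMod (2 * N)} (h : n = m + 1) : parity N n ≠ parity N m := by
  rw [h, map_add, map_one]
  generalize parity N m = a
  revert a
  decide

lemma wb_mul_wb_of_parity_eq {n m : ZMod (2 * N)} (h : parity N n = parity N m) (hne : n ≠ m) :
    wb (2 * N) n * wb (2 * N) m = -(wb (2 * N) m * wb (2 * N) n) :=
  wb_mul_wb_eq_neg _ hne (fun e => parity_ne_of_add_one (by linear_combination e) h)
    (fun e => parity_ne_of_add_one (by linear_combination -e) h.symm)

lemma parity_sub_one_eq_of_ne {p : ZMod 2} {k : ZMod (2 * N)} (h : parity N k ≠ p) :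
    parity N (k - 1) = p ∧ parity N (k + 1) = p := by
  rw [map_sub, map_add, map_one]
  generalize parity N k = a at h
  revert a p
  decide

lemma neg_one_pow_val_eq [NeZero N] (x : ZMod (2 * N)) :
    (-1 : K) ^ x.val = (-1) ^ (parity N x).val := by
  rw [parity, ZMod.castHom_apply, ZMod.cast_eq_val, ZMod.val_natCast,
    ← neg_one_pow_eq_pow_mod_two]

lemma neg_one_pow_val_add_one [NeZero N] (x : ZMod (2 * N)) :
    (-1 : K) ^ (x + 1).val = -(-1) ^ x.val := by
  rw [neg_one_pow_val_eq, neg_one_pow_val_eq, map_add, map_one, ZMod.val_add, ZMod.val_one,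
    ← neg_one_pow_eq_pow_mod_two, pow_succ, mul_neg_one]

lemma commCoeff_add_one_mul_commCoeff_sub_one (hN : 2 ≤ N) (k : ZMod (2 * N)) :
    commCoeff (2 * N) (k + 1) k * commCoeff (2 * N) (k - 1) k = -1 := by
  have : NeZero N := ⟨by omega⟩
  have hk : (-1 : K) ^ k.val = -(-1) ^ (k - 1).val := by
    rw [← neg_one_pow_val_add_one, sub_add_cancel]
  have hω : ω ≠ 0 := RatFunc.X_ne_zero
  have hε : (-1 : K) ^ (k - 1).val ≠ 0 := by simp
  rw [commCoeff_add_one_self (by omega), commCoeff_sub_one_self (by omega), hk]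
  field_simp

end Parity

section ParityList

variable {N : ℕ}

/-- `parityIndex N 1 j = M - 1 - 2j` and `parityIndex N 0 j = M - 2j` are the `j`-th factors of
`B_1` and `B_2`. -/
def parityIndex (N p j : ℕ) : ZMod (2 * N) := -((2 * j + p : ℕ) : ZMod (2 * N))

def parityList (N p : ℕ) : List (ZMod (2 * N)) := (List.range N).map (parityIndex N p)

lemma parity_neg_natCast (a : ℕ) : parity N (-(a : ZMod (2 * N))) = a := by
  rw [map_neg, map_natCast, ZMod.neg_eq_self_mod_two]

lemma parity_parityIndex (p j : ℕ) : parity N (parityIndex N p j) = p := by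
  rw [parityIndex, parity_neg_natCast, ZMod.natCast_eq_natCast_iff']
  omega

lemma length_parityList (p : ℕ) : (parityList N p).length = N := by
  rw [parityList, List.length_map, List.length_range]

lemma mem_parityList_iff [NeZero N] {p : ℕ} (hp : p < 2) {x : ZMod (2 * N)} :
    x ∈ parityList N p ↔ parity N x = p := by
  constructor
  · intro hx
    obtain ⟨j, -, rfl⟩ := List.mem_map.1 hx
    exact parity_parityIndex p j
  · intro hx
    set v := (-x).val
    have hv : v < 2 * N := ZMod.val_lt _
    have hvx : -(v : ZMod (2 * N)) = x := by rw [ZMod.natCast_zmod_val, neg_neg]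
    have hvp : v % 2 = p := by
      have := parity_neg_natCast (N := N) v
      rw [hvx, hx, ZMod.natCast_eq_natCast_iff'] at this
      omega
    refine List.mem_map.2 ⟨v / 2, List.mem_range.2 (by omega), ?_⟩
    rw [← hvx, parityIndex]
    congr 2
    omega

lemma nodup_parityList {p : ℕ} (hp : p < 2) : (parityList N p).Nodup := by
  refine List.Nodup.map_on (fun i hi j hj hij => ?_) List.nodup_range
  rw [List.mem_range] at hi hj
  rw [parityIndex, parityIndex, neg_inj] at hij
  have := ZMod.eq_of_natCast_eq (by omega) (by omega) hij
  omega

lemma prod_commCoeff_parityList (hN : 2 ≤ N) (heven : Even N) {p : ℕ} (hp : p < 2)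
    (k : ZMod (2 * N)) : ((parityList N p).map (commCoeff (2 * N) · k)).prod = -1 := by
  have : NeZero N := ⟨by omega⟩
  rw [← List.prod_toFinset _ (nodup_parityList hp)]
  set s := (parityList N p).toFinset
  have hmem : ∀ x, x ∈ s ↔ parity N x = p := fun x => by
    rw [List.mem_toFinset, mem_parityList_iff hp]
  have hcard : s.card = N := by
    rw [List.toFinset_card_of_nodup (nodup_parityList hp), length_parityList]
  have hfar : ∀ j, j ≠ k → j ≠ k + 1 → j ≠ k - 1 → commCoeff (2 * N) j k = -1 :=
    fun j h₀ h₁ h₂ => commCoeff_of_not_adjacent h₀ (fun h => h₂ (by rw [h]; ring)) h₁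
  by_cases hk : parity N k = p
  · rw [Finset.prod_eq_mul_pow_of_forall_ne ((hmem k).2 hk), commCoeff_self, one_mul, hcard]
    · exact (Nat.Even.sub_odd (by omega) heven odd_one).neg_one_pow
    · intro j hj hjk
      have hjk' : parity N j = parity N k := ((hmem j).1 hj).trans hk.symm
      exact hfar j hjk (fun h => parity_ne_of_add_one h hjk')
        (fun h => parity_ne_of_add_one (sub_eq_iff_eq_add.1 h.symm) hjk'.symm)
  · obtain ⟨hpred, hsucc⟩ := parity_sub_one_eq_of_ne hk
    have hne : k - 1 ≠ k + 1 := fun h =>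
      ZMod.natCast_ne_zero_of_lt (M := 2 * N) two_pos (by omega)
        (by push_cast; linear_combination -h)
    rw [← Finset.mul_prod_erase s _ ((hmem _).2 hsucc),
      Finset.prod_eq_mul_pow_of_forall_ne (Finset.mem_erase.2 ⟨hne, (hmem _).2 hpred⟩),
      ← mul_assoc, commCoeff_add_one_mul_commCoeff_sub_one hN,
      Finset.card_erase_of_mem ((hmem _).2 hsucc), hcard,
      (by rw [Nat.sub_sub]; exact heven.tsub even_two : Even (N - 1 - 1)).neg_one_pow, mul_one]
    intro j hj hjne
    obtain ⟨hj₁, hjs⟩ := Finset.mem_erase.1 hj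
    exact hfar j (fun h => hk (h ▸ (hmem j).1 hjs)) hj₁ hjne

end ParityList

section Products

variable {N : ℕ}

lemma ofFn_eq_map_parityList {α : Type*} (g : ZMod (2 * N) → α) {p : ℕ} (hp : p < 2) :
    List.ofFn (fun j : Fin (2 * N / 2) => g ((2 * N - p - 2 * (j : ℕ) : ℕ) : ZMod (2 * N))) =
      (parityList N p).map g := by
  rw [List.ofFn_eq_map_range (Nat.mul_div_cancel_left N two_pos)
      fun j => g ((2 * N - p - 2 * j : ℕ) : ZMod (2 * N)), parityList, List.map_map]
  refine List.map_congr_left fun j hj => ?_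
  rw [List.mem_range] at hj
  rw [Function.comp_apply, parityIndex, show 2 * N - p - 2 * j = 2 * N - (2 * j + p) by omega,
    ZMod.natCast_self_sub (by omega)]

lemma B1_eq_prod_parityList : B1 (2 * N) = ((parityList N 1).map (wb (2 * N))).prod :=
  congrArg List.prod (ofFn_eq_map_parityList (wb (2 * N)) one_lt_two)

lemma B2_eq_prod_parityList : B2 (2 * N) = ((parityList N 0).map (wb (2 * N))).prod :=
  congrArg List.prod (ofFn_eq_map_parityList (wb (2 * N)) zero_lt_two)

lemma Chat1_eq_prod_parityList : Chat1 (2 * N) = ((parityList N 1).map (wb (2 * N) · ^ 2)).prod :=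
  congrArg List.prod (ofFn_eq_map_parityList (wb (2 * N) · ^ 2) one_lt_two)

lemma Chat2_eq_prod_parityList : Chat2 (2 * N) = ((parityList N 0).map (wb (2 * N) · ^ 2)).prod :=
  congrArg List.prod (ofFn_eq_map_parityList (wb (2 * N) · ^ 2) zero_lt_two)

lemma ChatB_eq_prod_range : ChatB (2 * N) =
    ((List.range (2 * N)).map fun j : ℕ => wb (2 * N) (-(j : ZMod (2 * N)))).prod := by
  rw [ChatB, List.ofFn_eq_map_range rfl fun j => wb (2 * N) ((2 * N - j : ℕ) : ZMod (2 * N))]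
  refine congrArg List.prod (List.map_congr_left fun j hj => ?_)
  rw [ZMod.natCast_self_sub (List.mem_range.1 hj).le]

lemma prod_parityList_mul_wb (hN : 2 ≤ N) (heven : Even N) {p : ℕ} (hp : p < 2)
    (k : ZMod (2 * N)) :
    ((parityList N p).map (wb (2 * N))).prod * wb (2 * N) k =
      -(wb (2 * N) k * ((parityList N p).map (wb (2 * N))).prod) := by
  rw [List.prod_map_mul_eq_smul (wb (2 * N)) (commCoeff (2 * N) · k) (wb (2 * N) k) _
      fun a _ => wb_mul_wb _ a k,
    prod_commCoeff_parityList hN heven hp]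
  exact neg_one_smul (M := AbM (2 * N)) K _

lemma prod_parityList_mul_self [NeZero N] {p : ℕ} (hp : p < 2) :
    ((parityList N p).map (wb (2 * N))).prod * ((parityList N p).map (wb (2 * N))).prod =
      (-1 : K) ^ N.choose 2 • ((parityList N p).map (wb (2 * N) · ^ 2)).prod := by
  have hpairwise : (parityList N p).Pairwise
      fun a b => wb (2 * N) b * wb (2 * N) a = -(wb (2 * N) a * wb (2 * N) b) :=
    (nodup_parityList hp).pairwise_of_forall_ne fun a ha b hb hab => by
      rw [mem_parityList_iff hp] at ha hb
      exact wb_mul_wb_of_parity_eq (hb.trans ha.symm) (Ne.symm hab)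
  simpa only [length_parityList] using List.prod_map_mul_self_eq_smul (R := K) _ _ hpairwise

lemma prod_parityList_sq [NeZero N] {p : ℕ} (hp : p < 2) :
    ((parityList N p).map (wb (2 * N) · ^ 2)).prod =
      (-1 : K) ^ (N * (N - 1) / 2) • ((parityList N p).map (wb (2 * N))).prod ^ 2 := by
  rw [sq, prod_parityList_mul_self hp, smul_smul, ← pow_add, ← Nat.choose_two_right,
    Even.neg_one_pow ⟨_, rfl⟩, one_smul]

end Products

section Interleaving

variable {N : ℕ}

lemma prod_commCoeff_odd_even (hN : 2 ≤ N) {m : ℕ} (hm : m + 1 < N) :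
    ∏ i ∈ Finset.range (m + 1), commCoeff (2 * N) (parityIndex N 1 i) (parityIndex N 0 (m + 1)) =
      ω⁻¹ * (-1) ^ m := by
  have : NeZero N := ⟨by omega⟩
  have hcast : ∀ a b : ℕ, a < 2 * N → b < 2 * N → (a : ZMod (2 * N)) = b → a = b :=
    fun _ _ => ZMod.eq_of_natCast_eq
  have hfar : ∀ i ∈ Finset.range m,
      commCoeff (2 * N) (parityIndex N 1 i) (parityIndex N 0 (m + 1)) = -1 := by
    intro i hi
    rw [Finset.mem_range] at hi
    simp only [parityIndex]
    refine commCoeff_of_not_adjacent (fun h => ?_) (fun h => ?_) (fun h => ?_)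
    · have := hcast (2 * i + 1) (2 * (m + 1)) (by omega) (by omega)
        (by push_cast at h ⊢; linear_combination -h)
      omega
    · have := hcast (2 * (m + 1)) (2 * i) (by omega) (by omega)
        (by push_cast at h ⊢; linear_combination -h)
      omega
    · have := hcast (2 * i + 1) (2 * m + 1) (by omega) (by omega)
        (by push_cast at h ⊢; linear_combination -h)
      omega
  have hneighbour : parityIndex N 1 m = parityIndex N 0 (m + 1) + 1 := by
    simp only [parityIndex]
    push_cast
    ring
  rw [Finset.prod_range_succ, Finset.prod_congr rfl hfar, Finset.prod_const, Finset.card_range,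
    hneighbour, commCoeff_add_one_self (by omega), neg_one_pow_val_eq, parity_parityIndex,
    Nat.cast_zero, ZMod.val_zero, pow_zero, one_mul, mul_comm]

lemma prod_prod_commCoeff_odd_even (hN : 2 ≤ N) :
    ∏ j ∈ Finset.range N, ∏ i ∈ Finset.range j,
        commCoeff (2 * N) (parityIndex N 1 i) (parityIndex N 0 j) =
      (-1) ^ ((N - 1) * (N - 2) / 2) * ω ^ ((1 : ℤ) - N) := by
  obtain ⟨n, rfl⟩ : ∃ n, N = n + 1 := ⟨N - 1, by omega⟩
  rw [Finset.prod_range_succ', Finset.prod_range_zero, mul_one,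
    Finset.prod_congr rfl fun m hm => prod_commCoeff_odd_even hN
      (by have := Finset.mem_range.1 hm; omega),
    Finset.prod_mul_distrib, Finset.prod_const, Finset.card_range, Finset.prod_pow_eq_pow_sum,
    Finset.sum_range_id, Nat.add_sub_cancel, show n + 1 - 2 = n - 1 by omega,
    show (1 : ℤ) - (n + 1 : ℕ) = -(n : ℤ) by push_cast; ring, zpow_neg, zpow_natCast, inv_pow,
    mul_comm]

lemma ChatB_eq_smul (hN : 2 ≤ N) : ChatB (2 * N) =
    ((-1) ^ ((N - 1) * (N - 2) / 2) * ω ^ ((1 : ℤ) - N)) • (B2 (2 * N) * B1 (2 * N)) := by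
  rw [ChatB_eq_prod_range, List.prod_map_range_two_mul]
  refine (List.prod_range_mul_eq_smul (wb (2 * N) ∘ parityIndex N 0)
    (wb (2 * N) ∘ parityIndex N 1) (fun i j => commCoeff (2 * N) (parityIndex N 1 i)
      (parityIndex N 0 j)) N fun _ _ _ _ => wb_mul_wb _ _ _).trans ?_
  rw [prod_prod_commCoeff_odd_even hN, B2_eq_prod_parityList, B1_eq_prod_parityList, parityList,
    parityList, List.map_map, List.map_map]

end Interleaving

/-- properties of `B_1` and `B_2` in `A_M^b` for `M = 2N`,
`N ≥ 2` even. -/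
theorem stmt18 (N : ℕ) (hN : 2 ≤ N) (heven : Even N) :
    (∀ k : ZMod (2*N),
        B1 (2*N) * wb (2*N) k + wb (2*N) k * B1 (2*N) = 0 ∧
        B2 (2*N) * wb (2*N) k + wb (2*N) k * B2 (2*N) = 0) ∧
    B1 (2*N) * B2 (2*N) = B2 (2*N) * B1 (2*N) ∧
    Chat1 (2*N) = ((-1 : K) ^ (N*(N-1)/2)) • (B1 (2*N))^2 ∧
    Chat2 (2*N) = ((-1 : K) ^ (N*(N-1)/2)) • (B2 (2*N))^2 ∧
    ChatB (2*N) = (((-1 : K) ^ ((N-1)*(N-2)/2)) * ω ^ ((1 : ℤ) - (N : ℤ)))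
        • (B2 (2*N) * B1 (2*N)) := by
  have : NeZero N := ⟨by omega⟩
  have hB1 : ∀ k, B1 (2 * N) * wb (2 * N) k = -(wb (2 * N) k * B1 (2 * N)) := fun k => by
    rw [B1_eq_prod_parityList, prod_parityList_mul_wb hN heven one_lt_two]
  refine ⟨fun k => ⟨?_, ?_⟩, ?_, ?_, ?_, ChatB_eq_smul hN⟩
  · rw [hB1, neg_add_cancel]
  · rw [B2_eq_prod_parityList, prod_parityList_mul_wb hN heven zero_lt_two, neg_add_cancel]
  · rw [B2_eq_prod_parityList, List.prod_map_mul_eq_neg_one_pow_smul (R := K) _ _ _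
      fun a _ => (neg_eq_iff_eq_neg.2 (hB1 a)).symm, length_parityList, heven.neg_one_pow,
      one_smul]
  · rw [Chat1_eq_prod_parityList, B1_eq_prod_parityList, prod_parityList_sq one_lt_two]
  · rw [Chat2_eq_prod_parityList, B2_eq_prod_parityList, prod_parityList_sq zero_lt_two]
end
end
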